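/- arXiv:1409.7380 — 7 statements merged into one kernel-verified Lean document; each statement's English description precedes it below -/
import Mathlib

section
/- Every fluid model (y, x) satisfies (y(t), x(t)) → (0, 0) as t → ∞ and sup_{t ≥ 0} ‖(y(t), x(t))‖ < ∞, and this holds uniformly over initial states from compact sets: for every compact set K ⊆ {(y₀, x₀) ∈ ℝ² : x₀ ≥ -λ/β} there exists M < ∞ such that every fluid model with (y(0), x(0)) ∈ K satisfies ‖(y(t), x(t))‖ ≤ M for all t ≥ 0, and for every δ > 0 there exists T < ∞ such that every fluid model with (y(0), x(0)) ∈ K satisfies ‖(y(t), x(t))‖ ≤ δ for all t ≥ T. -/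
open MeasureTheory Set Filter

/-- A fluid model: locally Lipschitz pair `(y, x)` on `[0,∞)` with `x ≥ -λ/β`,
satisfying the fluid ODE a.e. on `[0,∞)`. -/
def IsFluidModel (β γ ε lam : ℝ) (y x : ℝ → ℝ) : Prop :=
  (∀ T : ℝ, 0 < T → ∃ K : NNReal,
      LipschitzOnWith K y (Set.Icc 0 T) ∧ LipschitzOnWith K x (Set.Icc 0 T)) ∧
  (∀ t : ℝ, 0 ≤ t → -lam / β ≤ x t) ∧
  (∀ᵐ t ∂(volume.restrict (Set.Ici (0 : ℝ))),
    ∃ y' x' : ℝ, HasDerivAt y y' t ∧ HasDerivAt x x' t ∧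
      (-lam / β < x t → y' = β * x t ∧ x' = -(γ * β * x t) - ε * y t) ∧
      (x t = -lam / β → y' = -lam ∧ x' = max (γ * lam - ε * y t) 0))

/-!
`V = γ (ε y² + β x²) + ε x y` is a Lyapunov function. It is comparable to `y² + x²` because
`ε < γ² β`; in the interior `2γ V' ≤ -ε V`, and on the boundary `x = -λ/β` the drift is at most
`-(γλ)²`, so `V' ≤ -c min(V, 1)` almost everywhere. Along a fluid model `V` is absolutely
continuous, hence nonincreasing, and it drops below any level `r > 0` by time
`V(0) / (c min(r, 1))`. Uniformity over a compact set of initial states follows because `V` is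
bounded there.
-/

theorem AbsolutelyContinuousOnInterval.sub_le_mul_of_ae_deriv_le {f : ℝ → ℝ} {a b C : ℝ}
    (hf : AbsolutelyContinuousOnInterval f a b) (hab : a ≤ b)
    (hC : ∀ᵐ x, x ∈ Icc a b → deriv f x ≤ C) : f b - f a ≤ C * (b - a) := by
  rw [← hf.integral_deriv_eq_sub, mul_comm, ← smul_eq_mul, ← intervalIntegral.integral_const]
  exact intervalIntegral.integral_mono_ae_restrict hab hf.intervalIntegrable_deriv
    intervalIntegrable_const ((ae_restrict_iff' measurableSet_Icc).2 hC)

section DifferentialInequality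

variable {f : ℝ → ℝ} {a : ℝ}

theorem antitoneOn_Ici_of_ae_deriv_nonpos
    (hf : ∀ t, a ≤ t → AbsolutelyContinuousOnInterval f a t)
    (hf' : ∀ᵐ x, a ≤ x → deriv f x ≤ 0) : AntitoneOn f (Ici a) := by
  intro s hs t ht hst
  have hst' : AbsolutelyContinuousOnInterval f s t := (hf t ht).mono <| by
    rw [uIcc_of_le hst, uIcc_of_le (show a ≤ t from ht)]
    exact Icc_subset_Icc_left hs
  have := hst'.sub_le_mul_of_ae_deriv_le hst <| by
    filter_upwards [hf'] with x hx hxst using hx (hs.trans hxst.1)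
  linarith

theorem antitoneOn_Ici_of_ae_deriv_le_neg_min {c : ℝ} (hc : 0 ≤ c)
    (hf : ∀ t, a ≤ t → AbsolutelyContinuousOnInterval f a t) (hf₀ : ∀ t, a ≤ t → 0 ≤ f t)
    (hf' : ∀ᵐ x, a ≤ x → deriv f x ≤ -c * min (f x) 1) : AntitoneOn f (Ici a) :=
  antitoneOn_Ici_of_ae_deriv_nonpos hf <| by
    filter_upwards [hf'] with x hx hax
    exact (hx hax).trans <|
      mul_nonpos_of_nonpos_of_nonneg (neg_nonpos.2 hc) (le_min (hf₀ x hax) zero_le_one)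

theorem sub_le_of_lt_of_ae_deriv_le_neg_min {c r t : ℝ} (hc : 0 ≤ c)
    (hf : ∀ t, a ≤ t → AbsolutelyContinuousOnInterval f a t) (hf₀ : ∀ t, a ≤ t → 0 ≤ f t)
    (hf' : ∀ᵐ x, a ≤ x → deriv f x ≤ -c * min (f x) 1) (hat : a ≤ t) (hr : r < f t) :
    f t ≤ f a - c * min r 1 * (t - a) := by
  have hanti := antitoneOn_Ici_of_ae_deriv_le_neg_min hc hf hf₀ hf'
  have := (hf t hat).sub_le_mul_of_ae_deriv_le hat (C := -c * min r 1) <| by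
    filter_upwards [hf'] with x hx hxt
    have hrx : r ≤ f x := hr.le.trans (hanti hxt.1 hat hxt.2)
    nlinarith [hx hxt.1, min_le_min_right 1 hrx]
  linarith

end DifferentialInequality

theorem tendsto_prodMk_nhds_zero_of_sqrt_le {f g : ℝ → ℝ}
    (h : ∀ δ, 0 < δ → ∃ T, ∀ t, T ≤ t → √(f t ^ 2 + g t ^ 2) ≤ δ) :
    Tendsto (fun t => (f t, g t)) atTop (nhds (0, 0)) := by
  refine Metric.tendsto_atTop.2 fun δ hδ => ?_
  obtain ⟨T, hT⟩ := h (δ / 2) (half_pos hδ)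
  refine ⟨T, fun t ht => lt_of_le_of_lt ?_ (half_lt_self hδ)⟩
  rw [Prod.dist_eq, Real.dist_eq, Real.dist_eq, sub_zero, sub_zero]
  exact max_le ((Real.abs_le_sqrt (le_add_of_nonneg_right (sq_nonneg _))).trans (hT t ht))
    ((Real.abs_le_sqrt (le_add_of_nonneg_left (sq_nonneg _))).trans (hT t ht))

def lyapunov (β γ ε y x : ℝ) : ℝ := γ * (ε * y ^ 2 + β * x ^ 2) + ε * (x * y)

def lyapunovDeriv (β γ ε y x y' x' : ℝ) : ℝ :=
  γ * (ε * (2 * y * y') + β * (2 * x * x')) + ε * (x' * y + x * y')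

section Lyapunov

variable {β γ ε lam Y X : ℝ}

theorem mul_sq_add_sq_le_lyapunov (hγ : 0 < γ) (hε : 0 < ε) (hεβ : ε ≤ γ ^ 2 * β) :
    γ * min ε β / 2 * (Y ^ 2 + X ^ 2) ≤ lyapunov β γ ε Y X := by
  have hcross : 0 ≤ γ * (ε * Y ^ 2 + β * X ^ 2) + 2 * ε * (X * Y) := by
    refine nonneg_of_mul_nonneg_right (a := γ * ε) ?_ (mul_pos hγ hε)
    nlinarith [sq_nonneg (γ * ε * Y + ε * X),
      mul_nonneg (mul_nonneg hε.le (sub_nonneg.2 hεβ)) (sq_nonneg X)]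
  have hY : γ * min ε β * Y ^ 2 ≤ γ * ε * Y ^ 2 := by gcongr; exact min_le_left _ _
  have hX : γ * min ε β * X ^ 2 ≤ γ * β * X ^ 2 := by gcongr; exact min_le_right _ _
  unfold lyapunov
  nlinarith

theorem lyapunov_nonneg (hβ : 0 < β) (hγ : 0 < γ) (hε : 0 < ε) (hεβ : ε ≤ γ ^ 2 * β) :
    0 ≤ lyapunov β γ ε Y X :=
  le_trans (by positivity) (mul_sq_add_sq_le_lyapunov hγ hε hεβ)

theorem lyapunovDeriv_interior_le (hγ : 0 < γ) (hε : 0 < ε) (hεβ : ε < γ ^ 2 * β / 4) :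
    2 * γ * lyapunovDeriv β γ ε Y X (β * X) (-(γ * β * X) - ε * Y)
      ≤ -(ε * lyapunov β γ ε Y X) := by
  -- `Q := -(2γ V' + ε V)` satisfies `4γ Q = (2γεY + (2γ²β - ε)X)² + D X²`, `D` as in `hD`.
  have hD : 0 ≤ 12 * (γ ^ 2 * β) ^ 2 - 8 * (γ ^ 2 * β) * ε - ε ^ 2 := by
    nlinarith [mul_pos hε (by linarith : 0 < γ ^ 2 * β / 4 - ε)]
  have hQ : 0 ≤ (4 * γ ^ 3 * β ^ 2 - 3 * γ * ε * β) * X ^ 2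
      + ε * (2 * γ ^ 2 * β - ε) * (X * Y) + γ * ε ^ 2 * Y ^ 2 := by
    refine nonneg_of_mul_nonneg_right (a := 4 * γ) ?_ (by positivity)
    nlinarith [sq_nonneg (2 * γ * ε * Y + (2 * γ ^ 2 * β - ε) * X), mul_nonneg hD (sq_nonneg X)]
  unfold lyapunovDeriv lyapunov
  nlinarith

theorem lyapunovDeriv_boundary_le (hβ : 0 < β) (hγ : 0 < γ) (hlam : 0 < lam)
    (hεβ : ε < γ ^ 2 * β / 4) (hX : β * X = -lam) :
    lyapunovDeriv β γ ε Y X (-lam) (max (γ * lam - ε * Y) 0) ≤ -(γ * lam) ^ 2 := by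
  have hcross : 4 * (ε * (X * -lam)) ≤ (γ * lam) ^ 2 := by
    refine le_of_mul_le_mul_left ?_ hβ
    have : β * (4 * (ε * (X * -lam))) = 4 * ε * lam ^ 2 := by
      linear_combination (-(4 * ε * lam)) * hX
    rw [this]
    nlinarith [sq_nonneg lam]
  unfold lyapunovDeriv
  rcases le_total (γ * lam - ε * Y) 0 with h | h
  · rw [max_eq_right h]
    nlinarith [mul_le_mul_of_nonneg_left (by linarith : γ * lam ≤ ε * Y)
      (by positivity : 0 ≤ γ * lam)]
  · rw [max_eq_left h]
    linear_combination (2 * γ * (γ * lam - ε * Y)) * hX + sq_nonneg (ε * Y - γ * lam / 2)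
      + hcross / 4 + sq_nonneg (γ * lam) / 2

theorem sqrt_sq_add_sq_le_of_lyapunov_le {R : ℝ} (hβ : 0 < β) (hγ : 0 < γ) (hε : 0 < ε)
    (hεβ : ε ≤ γ ^ 2 * β) (hV : lyapunov β γ ε Y X ≤ R) :
    √(Y ^ 2 + X ^ 2) ≤ √(2 * R / (γ * min ε β)) := by
  refine Real.sqrt_le_sqrt ?_
  rw [le_div_iff₀ (mul_pos hγ (lt_min hε hβ))]
  nlinarith [mul_sq_add_sq_le_lyapunov (Y := Y) (X := X) hγ hε hεβ]

theorem HasDerivAt.lyapunov {y x : ℝ → ℝ} {y' x' t : ℝ} (hy : HasDerivAt y y' t)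
    (hx : HasDerivAt x x' t) :
    HasDerivAt (fun s => lyapunov β γ ε (y s) (x s)) (lyapunovDeriv β γ ε (y t) (x t) y' x') t :=
  ((((hy.pow 2).const_mul ε).add ((hx.pow 2).const_mul β)).const_mul γ).add
    ((hx.mul hy).const_mul ε) |>.congr_deriv (by simp only [lyapunovDeriv]; push_cast; ring)

end Lyapunov

namespace IsFluidModel

variable {β γ ε lam : ℝ} {y x : ℝ → ℝ}

theorem absolutelyContinuousOnInterval_lyapunov (h : IsFluidModel β γ ε lam y x) {t : ℝ}
    (ht : 0 ≤ t) : AbsolutelyContinuousOnInterval (fun s => lyapunov β γ ε (y s) (x s)) 0 t := by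
  obtain ⟨K, hyK, hxK⟩ := h.1 (t + 1) (by linarith)
  have hsub : uIcc 0 t ⊆ Icc 0 (t + 1) := by
    rw [uIcc_of_le ht]
    exact Icc_subset_Icc_right (by linarith)
  have hy := (hyK.mono hsub).absolutelyContinuousOnInterval
  have hx := (hxK.mono hsub).absolutelyContinuousOnInterval
  simpa only [lyapunov, sq] using
    ((((hy.fun_mul hy).const_mul ε).fun_add ((hx.fun_mul hx).const_mul β)).const_mul γ).fun_add
      ((hx.fun_mul hy).const_mul ε)

theorem ae_deriv_lyapunov_le (h : IsFluidModel β γ ε lam y x) (hβ : 0 < β) (hγ : 0 < γ)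
    (hε : 0 < ε) (hεβ : ε < γ ^ 2 * β / 4) (hlam : 0 < lam) :
    ∀ᵐ t, 0 ≤ t → deriv (fun s => lyapunov β γ ε (y s) (x s)) t
      ≤ -min (ε / (2 * γ)) ((γ * lam) ^ 2) * min (lyapunov β γ ε (y t) (x t)) 1 := by
  filter_upwards [(ae_restrict_iff' measurableSet_Ici).1 h.2.2] with t ht ht₀
  obtain ⟨y', x', hy, hx, hint, hbdry⟩ := ht ht₀
  rw [(hy.lyapunov hx).deriv]
  have hV : 0 ≤ lyapunov β γ ε (y t) (x t) := lyapunov_nonneg hβ hγ hε (by linarith)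
  have hmin₀ : 0 ≤ min (lyapunov β γ ε (y t) (x t)) 1 := le_min hV zero_le_one
  rcases (h.2.1 t ht₀).lt_or_eq with hlt | heq
  · obtain ⟨rfl, rfl⟩ := hint hlt
    have hD := lyapunovDeriv_interior_le (Y := y t) (X := x t) hγ hε hεβ
    have hc : min (ε / (2 * γ)) ((γ * lam) ^ 2) ≤ ε / (2 * γ) := min_le_left _ _
    have hrate : ε / (2 * γ) * lyapunov β γ ε (y t) (x t)
        ≤ -lyapunovDeriv β γ ε (y t) (x t) (β * x t) (-(γ * β * x t) - ε * y t) := by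
      rw [div_mul_eq_mul_div, div_le_iff₀ (by positivity)]
      linarith
    nlinarith [mul_le_mul_of_nonneg_left (min_le_left (lyapunov β γ ε (y t) (x t)) 1)
      (by positivity : 0 ≤ ε / (2 * γ)), mul_le_mul_of_nonneg_right hc hmin₀]
  · obtain ⟨rfl, rfl⟩ := hbdry heq.symm
    have hX : β * x t = -lam := by rw [← heq]; field_simp
    have hD := lyapunovDeriv_boundary_le (Y := y t) (ε := ε) hβ hγ hlam hεβ hX
    have hc : min (ε / (2 * γ)) ((γ * lam) ^ 2) ≤ (γ * lam) ^ 2 := min_le_right _ _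
    nlinarith [mul_le_mul_of_nonneg_right hc hmin₀,
      mul_le_mul_of_nonneg_left (min_le_right (lyapunov β γ ε (y t) (x t)) 1) (sq_nonneg (γ * lam))]

theorem antitoneOn_lyapunov (h : IsFluidModel β γ ε lam y x) (hβ : 0 < β) (hγ : 0 < γ)
    (hε : 0 < ε) (hεβ : ε < γ ^ 2 * β / 4) (hlam : 0 < lam) :
    AntitoneOn (fun t => lyapunov β γ ε (y t) (x t)) (Ici 0) :=
  antitoneOn_Ici_of_ae_deriv_le_neg_min (by positivity)
    (fun _ => h.absolutelyContinuousOnInterval_lyapunov)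
    (fun _ _ => lyapunov_nonneg hβ hγ hε (by linarith)) (h.ae_deriv_lyapunov_le hβ hγ hε hεβ hlam)

theorem sqrt_le_of_lyapunov_le (h : IsFluidModel β γ ε lam y x) (hβ : 0 < β) (hγ : 0 < γ)
    (hε : 0 < ε) (hεβ : ε < γ ^ 2 * β / 4) (hlam : 0 < lam) {W t : ℝ}
    (hW : lyapunov β γ ε (y 0) (x 0) ≤ W) (ht : 0 ≤ t) :
    √(y t ^ 2 + x t ^ 2) ≤ √(2 * W / (γ * min ε β)) :=
  sqrt_sq_add_sq_le_of_lyapunov_le hβ hγ hε (by linarith) <|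
    (h.antitoneOn_lyapunov hβ hγ hε hεβ hlam (mem_Ici.2 le_rfl) ht ht).trans hW

end IsFluidModel

theorem exists_sqrt_le_of_lyapunov_le {β γ ε lam : ℝ} (hβ : 0 < β) (hγ : 0 < γ) (hε : 0 < ε)
    (hεβ : ε < γ ^ 2 * β / 4) (hlam : 0 < lam) (W : ℝ) {δ : ℝ} (hδ : 0 < δ) :
    ∃ T, ∀ y x : ℝ → ℝ, IsFluidModel β γ ε lam y x → lyapunov β γ ε (y 0) (x 0) ≤ W →
      ∀ t, T ≤ t → √(y t ^ 2 + x t ^ 2) ≤ δ := by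
  set c := min (ε / (2 * γ)) ((γ * lam) ^ 2)
  set r := γ * min ε β / 2 * δ ^ 2
  have hm : 0 < γ * min ε β := mul_pos hγ (lt_min hε hβ)
  have hcr : 0 < c * min r 1 := mul_pos (by positivity) (lt_min (by positivity) one_pos)
  refine ⟨max 0 (W / (c * min r 1)), fun y x h hW t ht => ?_⟩
  have ht₀ : 0 ≤ t := (le_max_left _ _).trans ht
  have hVt : lyapunov β γ ε (y t) (x t) ≤ r := by
    by_contra! hlt
    have hdecr := sub_le_of_lt_of_ae_deriv_le_neg_min (by positivity)
      (fun _ => h.absolutelyContinuousOnInterval_lyapunov)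
      (fun _ _ => lyapunov_nonneg hβ hγ hε (by linarith))
      (h.ae_deriv_lyapunov_le hβ hγ hε hεβ hlam) ht₀ hlt
    have hWt : W ≤ c * min r 1 * t := by
      rw [← div_le_iff₀' hcr]
      exact (le_max_right _ _).trans ht
    have hr : 0 < r := by positivity
    simp only [sub_zero] at hdecr
    linarith
  calc √(y t ^ 2 + x t ^ 2) ≤ √(2 * r / (γ * min ε β)) :=
        sqrt_sq_add_sq_le_of_lyapunov_le hβ hγ hε (by linarith) hVt
    _ = δ := by
      rw [show 2 * r / (γ * min ε β) = δ ^ 2 by simp only [r]; field_simp, Real.sqrt_sq hδ.le]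

/-- every fluid model converges to `(0,0)` and is bounded; moreover
boundedness and convergence are uniform over initial states in compact sets. -/
theorem stmt_1 (β γ ε lam : ℝ) (hβ : 0 < β) (hγ : 0 < γ) (hε : 0 < ε)
    (hεbound : ε < γ ^ 2 * β / 4) (hlam : 0 < lam) :
    (∀ y x : ℝ → ℝ, IsFluidModel β γ ε lam y x →
      Tendsto (fun t => (y t, x t)) atTop (nhds ((0 : ℝ), (0 : ℝ))) ∧
      ∃ M : ℝ, ∀ t : ℝ, 0 ≤ t → Real.sqrt ((y t) ^ 2 + (x t) ^ 2) ≤ M) ∧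
    (∀ K : Set (ℝ × ℝ), IsCompact K → K ⊆ {p : ℝ × ℝ | -lam / β ≤ p.2} →
      (∃ M : ℝ, ∀ y x : ℝ → ℝ, IsFluidModel β γ ε lam y x → (y 0, x 0) ∈ K →
        ∀ t : ℝ, 0 ≤ t → Real.sqrt ((y t) ^ 2 + (x t) ^ 2) ≤ M) ∧
      (∀ δ : ℝ, 0 < δ → ∃ T : ℝ, ∀ y x : ℝ → ℝ,
        IsFluidModel β γ ε lam y x → (y 0, x 0) ∈ K →
        ∀ t : ℝ, T ≤ t → Real.sqrt ((y t) ^ 2 + (x t) ^ 2) ≤ δ)) := by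
  refine ⟨fun y x h => ⟨?_, _, fun t => h.sqrt_le_of_lyapunov_le hβ hγ hε hεbound hlam le_rfl⟩,
    fun K hK _ => ?_⟩
  · refine tendsto_prodMk_nhds_zero_of_sqrt_le fun δ hδ => ?_
    obtain ⟨T, hT⟩ := exists_sqrt_le_of_lyapunov_le hβ hγ hε hεbound hlam _ hδ
    exact ⟨T, hT y x h le_rfl⟩
  obtain ⟨W, hW⟩ := hK.bddAbove_image (f := fun p => lyapunov β γ ε p.1 p.2)
    (by unfold lyapunov; fun_prop)
  refine ⟨⟨_, fun y x h h₀ t => h.sqrt_le_of_lyapunov_le hβ hγ hε hεbound hlam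
    (hW (mem_image_of_mem _ h₀))⟩, fun δ hδ => ?_⟩
  obtain ⟨T, hT⟩ := exists_sqrt_le_of_lyapunov_le hβ hγ hε hεbound hlam W hδ
  exact ⟨T, fun y x h h₀ => hT y x h (hW (mem_image_of_mem _ h₀))⟩
end

section
/- For all càdlàg inputs φ₁, φ₂ there exists a unique solution (ψ₁, ψ₂) of the integral equations for (φ₁, φ₂); moreover ψ₁ and ψ₂ are themselves càdlàg. -/
/-!
Writing `Ψ = (ψ₁, ψ₂)` and `Φ = (φ₁, φ₂)`, the equations read `Ψ t = Φ t + A ∫₀ᵗ Ψ` for the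
matrix `A = ((0, β), (-ε, -βγ))`, so `X t = ∫₀ᵗ Ψ` should solve `X' = A X + Φ`, `X 0 = 0`.
Duhamel's formula `X t = ∫₀ᵗ e^{(t-s)A} Φ s ds` gives a continuous `X` which, because `Φ` is
right-continuous, has right derivative `Φ + A X`; the fundamental theorem of calculus for right
derivatives then shows that `Ψ = Φ + A X` is a solution, càdlàg because `Φ` is and `A X` is
continuous. For uniqueness, the difference `D` of two solutions satisfies `D = A ∫₀ᵗ D`, so
`∫₀ᵗ D` solves `Y' = A Y`, `Y 0 = 0` and vanishes by uniqueness for Lipschitz ODEs; hence so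
does `D = A ∫₀ᵗ D`.
-/

open MeasureTheory Set Filter

/-- A càdlàg function on `[0,∞)`: Borel measurable, bounded on compacts,
right-continuous on `[0,∞)`, with finite left limits on `(0,∞)`. -/
def Cadlag (φ : ℝ → ℝ) : Prop :=
  Measurable φ ∧
  (∀ T : ℝ, 0 < T → ∃ M : ℝ, ∀ t ∈ Set.Icc (0 : ℝ) T, |φ t| ≤ M) ∧
  (∀ t : ℝ, 0 ≤ t → ContinuousWithinAt φ (Set.Ici t) t) ∧
  (∀ t : ℝ, 0 < t → ∃ L : ℝ, Tendsto φ (nhdsWithin t (Set.Iio t)) (nhds L))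

/-- `(ψ₁, ψ₂)` solves the integral equations of Lemma 5.2 for inputs `(φ₁, φ₂)`. -/
def SolvesIE (β γ ε : ℝ) (φ₁ φ₂ ψ₁ ψ₂ : ℝ → ℝ) : Prop :=
  Measurable ψ₁ ∧ Measurable ψ₂ ∧
  (∀ T : ℝ, 0 < T → ∃ M : ℝ, ∀ t ∈ Set.Icc (0 : ℝ) T, |ψ₁ t| ≤ M ∧ |ψ₂ t| ≤ M) ∧
  (∀ t : ℝ, 0 ≤ t →
    ψ₁ t = φ₁ t + β * ∫ s in (0 : ℝ)..t, ψ₂ s ∧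
    ψ₂ t = φ₂ t - β * γ * (∫ s in (0 : ℝ)..t, ψ₂ s) - ε * ∫ s in (0 : ℝ)..t, ψ₁ s)

open intervalIntegral NormedSpace
open scoped Topology

instance ContinuousLinearMap.isBoundedSMul_apply {𝕜 E : Type*} [NontriviallyNormedField 𝕜]
    [SeminormedAddCommGroup E] [NormedSpace 𝕜 E] : IsBoundedSMul (E →L[𝕜] E) E :=
  .of_norm_smul_le fun A v => A.le_opNorm v

theorem MeasureTheory.LocallyIntegrable.prodMk {X E F : Type*} [MeasurableSpace X]
    [TopologicalSpace X] [NormedAddCommGroup E] [NormedAddCommGroup F] {μ : Measure X}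
    {f : X → E} {g : X → F} (hf : LocallyIntegrable f μ) (hg : LocallyIntegrable g μ) :
    LocallyIntegrable (fun x => (f x, g x)) μ := fun x => by
  obtain ⟨s, hs, hfs⟩ := hf x
  obtain ⟨t, ht, hgt⟩ := hg x
  exact ⟨s ∩ t, inter_mem hs ht,
    (hfs.mono_set inter_subset_left).prodMk (hgt.mono_set inter_subset_right)⟩

theorem intervalIntegral.integral_prodMk {E F : Type*} [NormedAddCommGroup E] [NormedSpace ℝ E]
    [CompleteSpace E] [NormedAddCommGroup F] [NormedSpace ℝ F] [CompleteSpace F]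
    {f : ℝ → E} {g : ℝ → F} {a b : ℝ}
    (hf : IntervalIntegrable f volume a b) (hg : IntervalIntegrable g volume a b) :
    ∫ s in a..b, (f s, g s) = (∫ s in a..b, f s, ∫ s in a..b, g s) := by
  have hfg : IntervalIntegrable (fun s => (f s, g s)) volume a b :=
    ⟨hf.1.prodMk hg.1, hf.2.prodMk hg.2⟩
  exact Prod.ext ((ContinuousLinearMap.fst ℝ E F).intervalIntegral_comp_comm hfg).symm
    ((ContinuousLinearMap.snd ℝ E F).intervalIntegral_comp_comm hfg).symm

section LinearVolterra

variable {E : Type*} [NormedAddCommGroup E] [NormedSpace ℝ E] [CompleteSpace E]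
  (A : E →L[ℝ] E)

theorem continuous_exp_smul : Continuous fun t : ℝ => exp (t • A) :=
  continuous_iff_continuousAt.2 fun t => (hasDerivAt_exp_smul_const' A t).continuousAt

theorem exp_smul_apply_exp_neg_smul_apply (t : ℝ) (v : E) :
    exp (t • A) (exp (-t • A) v) = v := by
  let _ : NormedAlgebra ℚ (E →L[ℝ] E) := .restrictScalars ℚ ℝ _
  rw [← mul_apply_eq_comp, ← exp_add_of_commute ((Commute.refl A).smul_left t |>.smul_right _),
    ← add_smul, add_neg_cancel, zero_smul, exp_zero, one_apply_eq_self]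

/-- Duhamel's formula `∫₀ᵗ e^{(t-s)A} f(s) ds` for the solution of `x' = A x + f`, `x 0 = 0`,
with `e^{tA}` taken out of the integral. -/
noncomputable def mildSolution (f : ℝ → E) (t : ℝ) : E :=
  exp (t • A) (∫ s in 0..t, exp (-s • A) (f s))

variable {A} {f : ℝ → E}

theorem MeasureTheory.LocallyIntegrable.exp_neg_smul_apply (hf : LocallyIntegrable f) :
    LocallyIntegrable fun s => exp (-s • A) (f s) :=
  locallyIntegrableOn_univ.1 <| (hf.locallyIntegrableOn univ).continuousOn_smul
    isOpen_univ.isLocallyClosed ((continuous_exp_smul A).comp continuous_neg).continuousOn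

theorem continuous_mildSolution (hf : LocallyIntegrable f) : Continuous (mildSolution A f) :=
  have hc := continuous_primitive
    (fun _ _ => (hf.exp_neg_smul_apply.integrableOn_isCompact isCompact_uIcc).intervalIntegrable) 0
  isBoundedBilinearMap_apply.continuous.comp ((continuous_exp_smul A).prodMk hc)

theorem hasDerivWithinAt_mildSolution (hf : LocallyIntegrable f) {t : ℝ}
    (hft : ContinuousWithinAt f (Ioi t) t) :
    HasDerivWithinAt (mildSolution A f) (f t + A (mildSolution A f t)) (Ioi t) t := by
  have hg := hf.exp_neg_smul_apply (A := A)
  have hc : HasDerivWithinAt (fun u => ∫ s in 0..u, exp (-s • A) (f s))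
      (exp (-t • A) (f t)) (Ici t) t :=
    integral_hasDerivWithinAt_right
      ((hg.integrableOn_isCompact isCompact_uIcc).intervalIntegrable)
      hg.aestronglyMeasurable.stronglyMeasurableAtFilter
      ((((continuous_exp_smul A).comp continuous_neg).continuousWithinAt.clm_apply hft))
  have hx := ((hasDerivAt_exp_smul_const' A t).hasDerivWithinAt.clm_apply hc).mono
    Ioi_subset_Ici_self
  rw [exp_smul_apply_exp_neg_smul_apply, add_comm] at hx
  exact hx

theorem mildSolution_eq_integral (hf : LocallyIntegrable f)
    (hrc : ∀ t > 0, ContinuousWithinAt f (Ioi t) t) {t : ℝ} (ht : 0 ≤ t) :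
    mildSolution A f t = (∫ s in 0..t, f s) + A (∫ s in 0..t, mildSolution A f s) := by
  have hx := continuous_mildSolution (A := A) hf
  have hfi : IntervalIntegrable f volume 0 t :=
    (hf.integrableOn_isCompact isCompact_uIcc).intervalIntegrable
  have hAx : IntervalIntegrable (fun s => A (mildSolution A f s)) volume 0 t :=
    (A.continuous.comp hx).intervalIntegrable 0 t
  have hFTC := integral_eq_sub_of_hasDeriv_right_of_le ht hx.continuousOn
    (fun u hu => hasDerivWithinAt_mildSolution hf (hrc u hu.1)) (hfi.add hAx)
  rw [integral_add hfi hAx, A.intervalIntegral_comp_comm (hx.intervalIntegrable 0 t)] at hFTC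
  simpa [mildSolution] using hFTC.symm

theorem eqOn_zero_of_eq_apply_integral {d : ℝ → E} {T : ℝ} (hd : IntegrableOn d (Icc 0 T))
    (h : ∀ t ∈ Icc 0 T, d t = A (∫ s in 0..t, d s)) : EqOn d 0 (Icc 0 T) := by
  intro t ht
  have hT : 0 ≤ T := ht.1.trans ht.2
  set e : ℝ → E := fun t => ∫ s in 0..t, d s
  have he : ContinuousOn e (Icc 0 T) := by
    simpa [uIcc_of_le hT] using
      continuousOn_primitive_interval (a := 0) (b := T) (by simpa [uIcc_of_le hT] using hd)
  have hdc : ContinuousOn d (Icc 0 T) := (A.continuous.comp_continuousOn he).congr h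
  have he' : ∀ u ∈ Ico 0 T, HasDerivWithinAt e (A (e u)) (Ici u) u := fun u hu => by
    have hmem : Icc 0 T ∈ 𝓝[>] u := Icc_mem_nhdsGT_of_mem hu
    rw [← h u (Ico_subset_Icc_self hu)]
    have hdu : IntegrableOn d (uIcc 0 u) := by
      simpa [uIcc_of_le hu.1] using hd.mono_set (Icc_subset_Icc_right hu.2.le)
    exact integral_hasDerivWithinAt_right hdu.intervalIntegrable
      ⟨_, hmem, hd.aestronglyMeasurable⟩
      ((hdc u (Ico_subset_Icc_self hu)).mono_of_mem_nhdsWithin hmem)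
  have he0 : EqOn e 0 (Icc 0 T) := ODE_solution_unique_of_mem_Icc_right (v := fun _ => A)
    (s := fun _ => univ) (K := ‖A‖₊) (fun _ _ => A.lipschitz.lipschitzOnWith) he he'
    (fun _ _ => mem_univ _) continuousOn_const
    (fun u _ => by simpa [Pi.zero_def] using hasDerivWithinAt_const u (Ici u) (0 : E))
    (fun _ _ => mem_univ _) (by simp [e])
  rw [h t ht]
  simpa using congrArg A (he0 ht)

end LinearVolterra

section Cadlag

variable {φ : ℝ → ℝ}

theorem integrableOn_Icc_of_abs_le {f : ℝ → ℝ} (hm : Measurable f)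
    (hb : ∀ T : ℝ, 0 < T → ∃ M : ℝ, ∀ t ∈ Icc (0 : ℝ) T, |f t| ≤ M) (T : ℝ) :
    IntegrableOn f (Icc 0 T) := by
  obtain ⟨M, hM⟩ := hb (max T 1) (by positivity)
  refine Measure.integrableOn_of_bounded (M := M) measure_Icc_lt_top.ne hm.aestronglyMeasurable ?_
  filter_upwards [ae_restrict_mem measurableSet_Icc] with t ht
  exact hM t ⟨ht.1, ht.2.trans (le_max_left _ _)⟩

theorem Cadlag.add_continuous {g : ℝ → ℝ} (hφ : Cadlag φ) (hg : Continuous g) :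
    Cadlag fun t => φ t + g t := by
  obtain ⟨hm, hb, hrc, hll⟩ := hφ
  refine ⟨hm.add hg.measurable, fun T hT => ?_, fun t ht => (hrc t ht).add hg.continuousWithinAt,
    fun t ht => ?_⟩
  · obtain ⟨M, hM⟩ := hb T hT
    obtain ⟨C, hC⟩ := isCompact_Icc.exists_bound_of_continuousOn (hg.continuousOn (s := Icc 0 T))
    exact ⟨M + C, fun t ht => (abs_add_le _ _).trans (add_le_add (hM t ht) (hC t ht))⟩
  · obtain ⟨L, hL⟩ := hll t ht
    exact ⟨L + g t, hL.add (hg.continuousAt.mono_left nhdsWithin_le_nhds)⟩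

theorem Cadlag.locallyIntegrable_comp_max (hφ : Cadlag φ) :
    LocallyIntegrable fun t => φ (max t 0) := fun x => by
  obtain ⟨M, hM⟩ := hφ.2.1 (|x| + 1) (by positivity)
  refine ⟨Icc (x - 1) (x + 1), Icc_mem_nhds (by linarith) (by linarith),
    Measure.integrableOn_of_bounded (M := M) measure_Icc_lt_top.ne
      (hφ.1.comp (measurable_id.max measurable_const)).aestronglyMeasurable ?_⟩
  filter_upwards [ae_restrict_mem measurableSet_Icc] with t ht
  exact hM _ ⟨le_max_right _ _, max_le (by linarith [ht.2, le_abs_self x]) (by positivity)⟩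

theorem Cadlag.continuousWithinAt_comp_max (hφ : Cadlag φ) {t : ℝ} (ht : 0 < t) :
    ContinuousWithinAt (fun s => φ (max s 0)) (Ioi t) t :=
  ((hφ.2.2.1 t ht.le).mono Ioi_subset_Ici_self).congr
    (fun s hs => by rw [max_eq_left (ht.trans hs).le]) (by rw [max_eq_left ht.le])

end Cadlag

section IntegralEquations

variable {β γ ε : ℝ} {φ₁ φ₂ ψ₁ ψ₂ χ₁ χ₂ : ℝ → ℝ}

variable (β γ ε) in
noncomputable def ieOp : (ℝ × ℝ) →L[ℝ] ℝ × ℝ :=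
  (β • ContinuousLinearMap.snd ℝ ℝ ℝ).prod
    (-(β * γ) • ContinuousLinearMap.snd ℝ ℝ ℝ - ε • ContinuousLinearMap.fst ℝ ℝ ℝ)

@[simp]
theorem ieOp_apply (p : ℝ × ℝ) : ieOp β γ ε p = (β * p.2, -(β * γ) * p.2 - ε * p.1) := by
  simp [ieOp]

theorem solvesIE_equations_iff {t : ℝ} (h₁ : IntervalIntegrable ψ₁ volume 0 t)
    (h₂ : IntervalIntegrable ψ₂ volume 0 t) :
    (ψ₁ t = φ₁ t + β * ∫ s in (0 : ℝ)..t, ψ₂ s ∧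
      ψ₂ t = φ₂ t - β * γ * (∫ s in (0 : ℝ)..t, ψ₂ s) - ε * ∫ s in (0 : ℝ)..t, ψ₁ s) ↔
    (ψ₁ t, ψ₂ t) = (φ₁ t, φ₂ t) + ieOp β γ ε (∫ s in (0 : ℝ)..t, (ψ₁ s, ψ₂ s)) := by
  rw [integral_prodMk h₁ h₂, ieOp_apply, Prod.ext_iff]
  simp only [Prod.fst_add, Prod.snd_add]
  ring_nf

theorem SolvesIE.integrableOn (h : SolvesIE β γ ε φ₁ φ₂ ψ₁ ψ₂) (T : ℝ) :
    IntegrableOn (fun s => (ψ₁ s, ψ₂ s)) (Icc 0 T) := by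
  obtain ⟨hm₁, hm₂, hb, -⟩ := h
  have hb₁ : ∀ T : ℝ, 0 < T → ∃ M : ℝ, ∀ t ∈ Icc (0 : ℝ) T, |ψ₁ t| ≤ M :=
    fun T hT => (hb T hT).imp fun _ hM t ht => (hM t ht).1
  have hb₂ : ∀ T : ℝ, 0 < T → ∃ M : ℝ, ∀ t ∈ Icc (0 : ℝ) T, |ψ₂ t| ≤ M :=
    fun T hT => (hb T hT).imp fun _ hM t ht => (hM t ht).2
  exact (integrableOn_Icc_of_abs_le hm₁ hb₁ T).prodMk (integrableOn_Icc_of_abs_le hm₂ hb₂ T)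

theorem SolvesIE.eq_add_ieOp_integral (h : SolvesIE β γ ε φ₁ φ₂ ψ₁ ψ₂) {t : ℝ} (ht : 0 ≤ t) :
    (ψ₁ t, ψ₂ t) = (φ₁ t, φ₂ t) + ieOp β γ ε (∫ s in (0 : ℝ)..t, (ψ₁ s, ψ₂ s)) := by
  have hi := h.integrableOn t
  exact (solvesIE_equations_iff
    ((intervalIntegrable_iff_integrableOn_Icc_of_le ht).2 (Integrable.fst hi))
    ((intervalIntegrable_iff_integrableOn_Icc_of_le ht).2 (Integrable.snd hi))).1 (h.2.2.2 t ht)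

theorem SolvesIE.unique (hψ : SolvesIE β γ ε φ₁ φ₂ ψ₁ ψ₂)
    (hχ : SolvesIE β γ ε φ₁ φ₂ χ₁ χ₂) {t : ℝ} (ht : 0 ≤ t) : χ₁ t = ψ₁ t ∧ χ₂ t = ψ₂ t := by
  set d : ℝ → ℝ × ℝ := fun s => (χ₁ s, χ₂ s) - (ψ₁ s, ψ₂ s)
  have hd : IntegrableOn d (Icc 0 t) := (hχ.integrableOn t).sub (hψ.integrableOn t)
  have hdeq : ∀ s ∈ Icc 0 t, d s = ieOp β γ ε (∫ r in (0 : ℝ)..s, d r) := fun s hs => by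
    have hi : ∀ {f : ℝ → ℝ × ℝ}, IntegrableOn f (Icc 0 t) → IntervalIntegrable f volume 0 s :=
      fun hf => (intervalIntegrable_iff_integrableOn_Icc_of_le hs.1).2
        (hf.mono_set (Icc_subset_Icc_right hs.2))
    simp only [d]
    rw [integral_sub (hi (hχ.integrableOn t)) (hi (hψ.integrableOn t)), map_sub,
      hχ.eq_add_ieOp_integral hs.1, hψ.eq_add_ieOp_integral hs.1]
    abel
  have hd0 := eqOn_zero_of_eq_apply_integral hd hdeq (⟨ht, le_rfl⟩ : t ∈ Icc 0 t)
  simpa [d, sub_eq_zero, Prod.ext_iff] using hd0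

/- The inputs are truncated at `0` so that the forcing is locally integrable on all of `ℝ`; this
does not change the solution on `[0, ∞)`. -/
variable (β γ ε φ₁ φ₂) in
noncomputable def ieSolution (t : ℝ) : ℝ × ℝ :=
  (φ₁ t, φ₂ t) +
    ieOp β γ ε (mildSolution (ieOp β γ ε) (fun s => (φ₁ (max s 0), φ₂ (max s 0))) t)

theorem cadlag_ieSolution (h₁ : Cadlag φ₁) (h₂ : Cadlag φ₂) :
    Cadlag (fun t => (ieSolution β γ ε φ₁ φ₂ t).1) ∧
      Cadlag (fun t => (ieSolution β γ ε φ₁ φ₂ t).2) := by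
  have hx := (ieOp β γ ε).continuous.comp <| continuous_mildSolution (A := ieOp β γ ε)
    (h₁.locallyIntegrable_comp_max.prodMk h₂.locallyIntegrable_comp_max)
  exact ⟨h₁.add_continuous hx.fst, h₂.add_continuous hx.snd⟩

theorem solvesIE_ieSolution (h₁ : Cadlag φ₁) (h₂ : Cadlag φ₂) :
    SolvesIE β γ ε φ₁ φ₂ (fun t => (ieSolution β γ ε φ₁ φ₂ t).1)
      (fun t => (ieSolution β γ ε φ₁ φ₂ t).2) := by
  set A := ieOp β γ ε
  set f : ℝ → ℝ × ℝ := fun s => (φ₁ (max s 0), φ₂ (max s 0))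
  have hf : LocallyIntegrable f :=
    h₁.locallyIntegrable_comp_max.prodMk h₂.locallyIntegrable_comp_max
  have hx := continuous_mildSolution (A := A) hf
  obtain ⟨hψ₁, hψ₂⟩ := cadlag_ieSolution (β := β) (γ := γ) (ε := ε) h₁ h₂
  refine ⟨hψ₁.1, hψ₂.1, fun T hT => ?_, fun t ht => ?_⟩
  · obtain ⟨M₁, hM₁⟩ := hψ₁.2.1 T hT
    obtain ⟨M₂, hM₂⟩ := hψ₂.2.1 T hT
    exact ⟨max M₁ M₂, fun t ht => ⟨(hM₁ t ht).trans (le_max_left _ _),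
      (hM₂ t ht).trans (le_max_right _ _)⟩⟩
  have hi : ∀ {g : ℝ → ℝ}, Cadlag g → IntervalIntegrable g volume 0 t := fun hg =>
    (intervalIntegrable_iff_integrableOn_Icc_of_le ht).2
      (integrableOn_Icc_of_abs_le hg.1 hg.2.1 t)
  refine (solvesIE_equations_iff (hi hψ₁) (hi hψ₂)).2 ?_
  have hAx : IntervalIntegrable (fun s => A (mildSolution A f s)) volume 0 t :=
    (A.continuous.comp hx).intervalIntegrable 0 t
  have hxt : mildSolution A f t = ∫ s in (0 : ℝ)..t, ieSolution β γ ε φ₁ φ₂ s := by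
    rw [mildSolution_eq_integral hf (fun u hu => (h₁.continuousWithinAt_comp_max hu).prodMk
      (h₂.continuousWithinAt_comp_max hu)) ht, ← A.intervalIntegral_comp_comm
      (hx.intervalIntegrable 0 t), ← integral_add
      (hf.integrableOn_isCompact isCompact_uIcc).intervalIntegrable hAx]
    refine integral_congr fun s hs => ?_
    rw [uIcc_of_le ht] at hs
    simp [ieSolution, f, A, max_eq_left hs.1]
  simp only [Prod.mk.eta, ← hxt]
  rfl

end IntegralEquations

/-- for càdlàg inputs the integral equations have a unique
solution on `[0,∞)`, which is itself càdlàg. -/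
theorem stmt_5 (β γ ε : ℝ) (φ₁ φ₂ : ℝ → ℝ) (h₁ : Cadlag φ₁) (h₂ : Cadlag φ₂) :
    ∃ ψ₁ ψ₂ : ℝ → ℝ, SolvesIE β γ ε φ₁ φ₂ ψ₁ ψ₂ ∧ Cadlag ψ₁ ∧ Cadlag ψ₂ ∧
      ∀ χ₁ χ₂ : ℝ → ℝ, SolvesIE β γ ε φ₁ φ₂ χ₁ χ₂ →
        ∀ t : ℝ, 0 ≤ t → χ₁ t = ψ₁ t ∧ χ₂ t = ψ₂ t := by
  have hsol := solvesIE_ieSolution (β := β) (γ := γ) (ε := ε) h₁ h₂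
  obtain ⟨hψ₁, hψ₂⟩ := cadlag_ieSolution (β := β) (γ := γ) (ε := ε) h₁ h₂
  exact ⟨_, _, hsol, hψ₁, hψ₂, fun _ _ hχ _ ht => hsol.unique hχ ht⟩
end

section
/- The solution map Φ taking (φ₁, φ₂) to the unique solution (ψ₁, ψ₂) of the integral equations is continuous in the topology of uniform convergence on compact sets: if φ₁ⁿ, φ₂ⁿ (n ∈ ℕ) and φ₁, φ₂ are càdlàg and φᵢⁿ → φᵢ uniformly on every compact subset of [0,∞) as n → ∞ for i = 1, 2, then the corresponding solutions satisfy ψᵢⁿ → ψᵢ uniformly on every compact subset of [0,∞) for i = 1, 2. -/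
open MeasureTheory Set Filter

/-- A measurable function bounded on `[0,T]` is interval integrable on `[0,t]` for `t ∈ [0,T]`. -/
lemma intInt_of_bddOn {f : ℝ → ℝ} (hm : Measurable f) {M T t : ℝ}
    (hb : ∀ s ∈ Icc (0:ℝ) T, |f s| ≤ M) (ht : 0 ≤ t) (htT : t ≤ T) :
    IntervalIntegrable f volume 0 t := by
  apply MeasureTheory.IntegrableOn.intervalIntegrable
  rw [uIcc_of_le ht]
  exact Measure.integrableOn_of_bounded (isCompact_Icc.measure_lt_top).ne
    hm.aestronglyMeasurable
    ((ae_restrict_iff' measurableSet_Icc).2 (ae_of_all _ fun s hs => by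
      rw [Real.norm_eq_abs]; exact hb s ⟨hs.1, hs.2.trans htT⟩))

/-- A globally bounded measurable function is interval integrable on every interval. -/
lemma intInt_of_bdd {f : ℝ → ℝ} (hm : Measurable f) {M : ℝ}
    (hb : ∀ s, |f s| ≤ M) (a b : ℝ) : IntervalIntegrable f volume a b := by
  apply MeasureTheory.IntegrableOn.intervalIntegrable
  exact Measure.integrableOn_of_bounded (isCompact_uIcc.measure_lt_top).ne
    hm.aestronglyMeasurable (ae_of_all _ fun s => by rw [Real.norm_eq_abs]; exact hb s)

/-- Grönwall-type estimate for a pair of functions satisfying an integral inequality. -/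
lemma gronwall_key (C : ℝ) (hC : 1 ≤ C) (u₁ u₂ : ℝ → ℝ)
    (hm₁ : Measurable u₁) (hm₂ : Measurable u₂)
    (T a M : ℝ) (hT : 0 < T) (ha : 0 ≤ a)
    (hbd : ∀ t ∈ Icc (0:ℝ) T, |u₁ t| ≤ M ∧ |u₂ t| ≤ M)
    (heq : ∀ t ∈ Icc (0:ℝ) T,
      |u₁ t| ≤ a + C * (|∫ s in (0:ℝ)..t, u₁ s| + |∫ s in (0:ℝ)..t, u₂ s|) ∧
      |u₂ t| ≤ a + C * (|∫ s in (0:ℝ)..t, u₁ s| + |∫ s in (0:ℝ)..t, u₂ s|)) :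
    ∀ t ∈ Icc (0:ℝ) T,
      |u₁ t| ≤ 2*a*Real.exp (2*C*T) ∧ |u₂ t| ≤ 2*a*Real.exp (2*C*T) := by
  have hC0 : (0:ℝ) < C := lt_of_lt_of_le one_pos hC
  have hM0 : 0 ≤ M := le_trans (abs_nonneg _) (hbd 0 ⟨le_refl _, hT.le⟩).1
  set D : ℝ → ℝ := (Icc (0:ℝ) T).indicator (fun s => |u₁ s| + |u₂ s|) with hDdef
  have hDm : Measurable D := (hm₁.abs.add hm₂.abs).indicator measurableSet_Icc
  have hDnn : ∀ s, 0 ≤ D s := fun s =>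
    indicator_nonneg (fun s _ => add_nonneg (abs_nonneg _) (abs_nonneg _)) s
  have hDb : ∀ s, |D s| ≤ 2*M := by
    intro s
    rw [abs_of_nonneg (hDnn s)]
    by_cases hs : s ∈ Icc (0:ℝ) T
    · rw [hDdef, indicator_of_mem hs]
      have := hbd s hs; linarith [this.1, this.2]
    · rw [hDdef, indicator_of_notMem hs]; linarith
  have hDint : ∀ p q : ℝ, IntervalIntegrable D volume p q := intInt_of_bdd hDm hDb
  set G : ℝ → ℝ := fun t => ∫ s in (0:ℝ)..t, D s with hGdef
  have hGc : Continuous G := intervalIntegral.continuous_primitive hDint 0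
  have hGnn : ∀ t, 0 ≤ t → 0 ≤ G t := fun t ht =>
    intervalIntegral.integral_nonneg ht (fun u _ => hDnn u)
  -- |∫ u₁| + |∫ u₂| ≤ G t on [0,T]
  have hsum : ∀ t ∈ Icc (0:ℝ) T,
      |∫ s in (0:ℝ)..t, u₁ s| + |∫ s in (0:ℝ)..t, u₂ s| ≤ G t := by
    intro t ht
    have h₁ : IntervalIntegrable u₁ volume 0 t :=
      intInt_of_bddOn hm₁ (fun s hs => (hbd s hs).1) ht.1 ht.2
    have h₂ : IntervalIntegrable u₂ volume 0 t :=
      intInt_of_bddOn hm₂ (fun s hs => (hbd s hs).2) ht.1 ht.2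
    have e : G t = ∫ s in (0:ℝ)..t, (|u₁ s| + |u₂ s|) := by
      apply intervalIntegral.integral_congr
      intro s hs
      rw [uIcc_of_le ht.1] at hs
      exact Set.indicator_of_mem (show s ∈ Icc (0:ℝ) T from ⟨hs.1, hs.2.trans ht.2⟩) _
    rw [e, intervalIntegral.integral_add h₁.abs h₂.abs]
    exact add_le_add (intervalIntegral.abs_integral_le_integral_abs ht.1)
      (intervalIntegral.abs_integral_le_integral_abs ht.1)
  have hDle : ∀ t ∈ Icc (0:ℝ) T, D t ≤ 2*a + 2*C * G t := by
    intro t ht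
    rw [hDdef, indicator_of_mem ht]
    obtain ⟨e₁, e₂⟩ := heq t ht
    have hs := hsum t ht
    nlinarith [hGnn t ht.1, abs_nonneg (∫ s in (0:ℝ)..t, u₁ s),
      abs_nonneg (∫ s in (0:ℝ)..t, u₂ s)]
  set g : ℝ → ℝ := fun t => ∫ s in (0:ℝ)..t, (2*a + 2*C * G s) with hgdef
  have hic : Continuous (fun s => 2*a + 2*C * G s) :=
    continuous_const.add (continuous_const.mul hGc)
  have hgd : ∀ x : ℝ, HasDerivAt g (2*a + 2*C * G x) x := fun x =>
    intervalIntegral.integral_hasDerivAt_right (hic.intervalIntegrable 0 x)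
      (hic.stronglyMeasurableAtFilter _ _) hic.continuousAt
  have hGg : ∀ t ∈ Icc (0:ℝ) T, G t ≤ g t := by
    intro t ht
    apply intervalIntegral.integral_mono_on ht.1 (hDint 0 t) (hic.intervalIntegrable 0 t)
    intro s hs
    exact hDle s ⟨hs.1, hs.2.trans ht.2⟩
  have hgnn : ∀ t, 0 ≤ t → 0 ≤ g t := fun t ht =>
    intervalIntegral.integral_nonneg ht (fun u hu => by
      have := hGnn u hu.1; nlinarith)
  have hgb := norm_le_gronwallBound_of_norm_deriv_right_le
    (f := g) (f' := fun x => 2*a + 2*C * G x) (δ := 0) (K := 2*C) (ε := 2*a) (a := 0) (b := T)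
    ((intervalIntegral.continuous_primitive (fun p q => hic.intervalIntegrable p q) 0).continuousOn)
    (fun x _ => (hgd x).hasDerivWithinAt)
    (by simp [hgdef])
    (by
      intro x hx
      show ‖2*a + 2*C * G x‖ ≤ 2*C * ‖g x‖ + 2*a
      have h1 := hGnn x hx.1
      have h2 := hGg x ⟨hx.1, hx.2.le⟩
      have h3 := hgnn x hx.1
      rw [Real.norm_eq_abs, Real.norm_eq_abs, abs_of_nonneg (by nlinarith),
        abs_of_nonneg h3]
      nlinarith)
  intro t ht
  have h1 : g t ≤ gronwallBound 0 (2*C) (2*a) (t - 0) :=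
    le_trans (le_abs_self _) (hgb t ht)
  have h2 : gronwallBound 0 (2*C) (2*a) (t - 0) =
      (2*a)/(2*C) * (Real.exp (2*C*t) - 1) := by
    rw [gronwallBound_of_K_ne_0 (by positivity)]
    simp
  have h3 : 2*C * ((2*a)/(2*C) * (Real.exp (2*C*t) - 1)) = 2*a*(Real.exp (2*C*t) - 1) := by
    field_simp
  have hDt := hDle t ht
  have hGt := hGg t ht
  have hexp : Real.exp (2*C*t) ≤ Real.exp (2*C*T) :=
    Real.exp_le_exp.2 (by nlinarith [ht.2])
  have hexp1 : (1:ℝ) ≤ Real.exp (2*C*t) := by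
    rw [← Real.exp_zero]; exact Real.exp_le_exp.2 (by nlinarith [ht.1])
  have hfin : D t ≤ 2*a*Real.exp (2*C*T) := by
    have hg2 : 2*C * g t ≤ 2*a*(Real.exp (2*C*t) - 1) := by
      calc 2*C * g t ≤ 2*C * gronwallBound 0 (2*C) (2*a) (t - 0) := by nlinarith
        _ = 2*a*(Real.exp (2*C*t) - 1) := by rw [h2]; exact h3
    nlinarith
  have hDt' : D t = |u₁ t| + |u₂ t| := indicator_of_mem ht _
  constructor
  · nlinarith [abs_nonneg (u₂ t)]
  · nlinarith [abs_nonneg (u₁ t)]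

/-- continuity of the solution map of the integral equations in the
topology of uniform convergence on compact subsets of `[0,∞)`. -/
theorem stmt_6 (β γ ε : ℝ)
    (φ₁ φ₂ : ℕ → ℝ → ℝ) (φ₁' φ₂' : ℝ → ℝ)
    (hn : ∀ n : ℕ, Cadlag (φ₁ n) ∧ Cadlag (φ₂ n))
    (h' : Cadlag φ₁' ∧ Cadlag φ₂')
    (hconv : ∀ T : ℝ, 0 < T →
      TendstoUniformlyOn (fun n => φ₁ n) φ₁' atTop (Set.Icc 0 T) ∧
      TendstoUniformlyOn (fun n => φ₂ n) φ₂' atTop (Set.Icc 0 T))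
    (ψ₁ ψ₂ : ℕ → ℝ → ℝ) (ψ₁' ψ₂' : ℝ → ℝ)
    (hsol : ∀ n : ℕ, SolvesIE β γ ε (φ₁ n) (φ₂ n) (ψ₁ n) (ψ₂ n))
    (hsol' : SolvesIE β γ ε φ₁' φ₂' ψ₁' ψ₂') :
    ∀ T : ℝ, 0 < T →
      TendstoUniformlyOn (fun n => ψ₁ n) ψ₁' atTop (Set.Icc 0 T) ∧
      TendstoUniformlyOn (fun n => ψ₂ n) ψ₂' atTop (Set.Icc 0 T) := by
  intro T hT
  set C : ℝ := |β| + |β*γ| + |ε| + 1 with hCdef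
  have habs : 0 ≤ |β| ∧ 0 ≤ |β*γ| ∧ 0 ≤ |ε| := ⟨abs_nonneg _, abs_nonneg _, abs_nonneg _⟩
  have hC : 1 ≤ C := by rw [hCdef]; linarith [habs.1, habs.2.1, habs.2.2]
  have hC0 : (0:ℝ) < C := lt_of_lt_of_le one_pos hC
  have key2 : ∀ η > (0:ℝ), ∀ᶠ n in atTop, ∀ t ∈ Icc (0:ℝ) T,
      |ψ₁ n t - ψ₁' t| < η ∧ |ψ₂ n t - ψ₂' t| < η := by
    intro η hη
    set a : ℝ := η / (4 * Real.exp (2*C*T)) with hadef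
    have hE : 0 < Real.exp (2*C*T) := Real.exp_pos _
    have ha : 0 < a := by rw [hadef]; positivity
    obtain ⟨hc1, hc2⟩ := hconv T hT
    filter_upwards [(Metric.tendstoUniformlyOn_iff.mp hc1) a ha,
      (Metric.tendstoUniformlyOn_iff.mp hc2) a ha] with n hn1 hn2
    obtain ⟨hm1n, hm2n, hbdn, heqn⟩ := hsol n
    obtain ⟨hm1', hm2', hbd', heq'⟩ := hsol'
    obtain ⟨Mn, hMn⟩ := hbdn T hT
    obtain ⟨M', hM'⟩ := hbd' T hT
    set u₁ : ℝ → ℝ := fun t => ψ₁ n t - ψ₁' t with hu₁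
    set u₂ : ℝ → ℝ := fun t => ψ₂ n t - ψ₂' t with hu₂
    have hbdu : ∀ t ∈ Icc (0:ℝ) T, |u₁ t| ≤ Mn + M' ∧ |u₂ t| ≤ Mn + M' := by
      intro t ht
      constructor
      · calc |u₁ t| ≤ |ψ₁ n t| + |ψ₁' t| := abs_sub (ψ₁ n t) (ψ₁' t)
          _ ≤ Mn + M' := add_le_add (hMn t ht).1 (hM' t ht).1
      · calc |u₂ t| ≤ |ψ₂ n t| + |ψ₂' t| := abs_sub (ψ₂ n t) (ψ₂' t)
          _ ≤ Mn + M' := add_le_add (hMn t ht).2 (hM' t ht).2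
    have hkeyhyp : ∀ t ∈ Icc (0:ℝ) T,
        |u₁ t| ≤ a + C * (|∫ s in (0:ℝ)..t, u₁ s| + |∫ s in (0:ℝ)..t, u₂ s|) ∧
        |u₂ t| ≤ a + C * (|∫ s in (0:ℝ)..t, u₁ s| + |∫ s in (0:ℝ)..t, u₂ s|) := by
      intro t ht
      have i1n : IntervalIntegrable (ψ₁ n) volume 0 t :=
        intInt_of_bddOn hm1n (fun s hs => (hMn s hs).1) ht.1 ht.2
      have i2n : IntervalIntegrable (ψ₂ n) volume 0 t :=
        intInt_of_bddOn hm2n (fun s hs => (hMn s hs).2) ht.1 ht.2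
      have i1' : IntervalIntegrable ψ₁' volume 0 t :=
        intInt_of_bddOn hm1' (fun s hs => (hM' s hs).1) ht.1 ht.2
      have i2' : IntervalIntegrable ψ₂' volume 0 t :=
        intInt_of_bddOn hm2' (fun s hs => (hM' s hs).2) ht.1 ht.2
      have hI1 : (∫ s in (0:ℝ)..t, u₁ s) =
          (∫ s in (0:ℝ)..t, ψ₁ n s) - ∫ s in (0:ℝ)..t, ψ₁' s :=
        intervalIntegral.integral_sub i1n i1'
      have hI2 : (∫ s in (0:ℝ)..t, u₂ s) =
          (∫ s in (0:ℝ)..t, ψ₂ n s) - ∫ s in (0:ℝ)..t, ψ₂' s :=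
        intervalIntegral.integral_sub i2n i2'
      obtain ⟨e₁n, e₂n⟩ := heqn t ht.1
      obtain ⟨e₁', e₂'⟩ := heq' t ht.1
      have hd₁ : |φ₁ n t - φ₁' t| ≤ a := by
        have := hn1 t ht; rw [Real.dist_eq] at this
        rw [abs_sub_comm]; exact this.le
      have hd₂ : |φ₂ n t - φ₂' t| ≤ a := by
        have := hn2 t ht; rw [Real.dist_eq] at this
        rw [abs_sub_comm]; exact this.le
      have hA1 : 0 ≤ |∫ s in (0:ℝ)..t, u₁ s| := abs_nonneg _
      have hA2 : 0 ≤ |∫ s in (0:ℝ)..t, u₂ s| := abs_nonneg _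
      constructor
      · have heq1 : u₁ t = (φ₁ n t - φ₁' t) + β * ∫ s in (0:ℝ)..t, u₂ s := by
          rw [hI2, hu₁]; simp only; rw [e₁n, e₁']; ring
        calc |u₁ t| ≤ |φ₁ n t - φ₁' t| + |β| * |∫ s in (0:ℝ)..t, u₂ s| := by
              rw [heq1]; refine (abs_add_le _ _).trans ?_; rw [abs_mul]
          _ ≤ a + C * (|∫ s in (0:ℝ)..t, u₁ s| + |∫ s in (0:ℝ)..t, u₂ s|) := by
              have hb : |β| ≤ C := by rw [hCdef]; linarith [habs.2.1, habs.2.2]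
              nlinarith
      · have heq2 : u₂ t = (φ₂ n t - φ₂' t) - β*γ * (∫ s in (0:ℝ)..t, u₂ s)
            - ε * ∫ s in (0:ℝ)..t, u₁ s := by
          rw [hI1, hI2, hu₂]; simp only; rw [e₂n, e₂']; ring
        calc |u₂ t| = |(φ₂ n t - φ₂' t) - β*γ * (∫ s in (0:ℝ)..t, u₂ s)
                - ε * ∫ s in (0:ℝ)..t, u₁ s| := by rw [heq2]
          _ ≤ |(φ₂ n t - φ₂' t) - β*γ * (∫ s in (0:ℝ)..t, u₂ s)|
                + |ε * ∫ s in (0:ℝ)..t, u₁ s| := abs_sub _ _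
          _ ≤ |φ₂ n t - φ₂' t| + |β*γ * (∫ s in (0:ℝ)..t, u₂ s)|
                + |ε * ∫ s in (0:ℝ)..t, u₁ s| := by
              linarith [abs_sub (φ₂ n t - φ₂' t) (β*γ * (∫ s in (0:ℝ)..t, u₂ s))]
          _ = |φ₂ n t - φ₂' t| + |β*γ| * |∫ s in (0:ℝ)..t, u₂ s|
                + |ε| * |∫ s in (0:ℝ)..t, u₁ s| := by rw [abs_mul (β*γ), abs_mul ε]
          _ ≤ a + C * (|∫ s in (0:ℝ)..t, u₁ s| + |∫ s in (0:ℝ)..t, u₂ s|) := by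
              have hb1 : |β*γ| ≤ C := by rw [hCdef]; linarith [habs.1, habs.2.2]
              have hb2 : |ε| ≤ C := by rw [hCdef]; linarith [habs.1, habs.2.1]
              nlinarith
    have hmain := gronwall_key C hC u₁ u₂ (hm1n.sub hm1') (hm2n.sub hm2')
      T a (Mn + M') hT ha.le hbdu hkeyhyp
    intro t ht
    obtain ⟨b1, b2⟩ := hmain t ht
    have hlt : 2*a*Real.exp (2*C*T) < η := by
      have : 2*a*Real.exp (2*C*T) = η/2 := by
        rw [hadef]; field_simp; ring
      linarith
    exact ⟨lt_of_le_of_lt b1 hlt, lt_of_le_of_lt b2 hlt⟩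
  refine ⟨?_, ?_⟩ <;> rw [Metric.tendstoUniformlyOn_iff]
  · intro η hη
    filter_upwards [key2 η hη] with n hn x hx
    rw [Real.dist_eq, abs_sub_comm]
    exact (hn x hx).1
  · intro η hη
    filter_upwards [key2 η hη] with n hn x hx
    rw [Real.dist_eq, abs_sub_comm]
    exact (hn x hx).2
end

section
/- The matrix V∞ = [[λ/(βγ), -λ/β], [-λ/β, λ(βγ² + ε)/(β²γ)]] satisfies the Lyapunov equation V∞ A + Aᵀ V∞ + σᵀσ = 0, where σᵀσ is the 2×2 matrix with rows (2λ, -2λγ) and (-2λγ, 2λγ²); that is, V∞ is a stationary solution of the matrix ODE V̇(t) = V(t)A + AᵀV(t) + σᵀσ. -/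
open Matrix

/-- the matrix `V∞` solves the Lyapunov equation
`V∞ A + Aᵀ V∞ + σᵀσ = 0`, i.e. it is a stationary solution of the matrix ODE
`V̇ = V A + Aᵀ V + σᵀσ`. -/
theorem stmt_7 (β γ ε lam : ℝ) (hβ : 0 < β) (hγ : 0 < γ) (hε : 0 < ε)
    (hεbound : ε < γ ^ 2 * β / 4) (hlam : 0 < lam) :
    let A : Matrix (Fin 2) (Fin 2) ℝ := !![0, -ε; β, -γ * β]
    let σ : Fin 2 → ℝ := ![-Real.sqrt (2 * lam), γ * Real.sqrt (2 * lam)]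
    let S : Matrix (Fin 2) (Fin 2) ℝ := Matrix.vecMulVec σ σ
    let Vinf : Matrix (Fin 2) (Fin 2) ℝ :=
      !![lam / (β * γ), -lam / β; -lam / β, lam * (β * γ ^ 2 + ε) / (β ^ 2 * γ)]
    S = !![2 * lam, -(2 * lam * γ); -(2 * lam * γ), 2 * lam * γ ^ 2] ∧
    Vinf * A + Aᵀ * Vinf + S = 0 := by
  intro A σ S Vinf
  have hsq : Real.sqrt (2 * lam) * Real.sqrt (2 * lam) = 2 * lam :=
    Real.mul_self_sqrt (by linarith)
  have hS : S = !![2 * lam, -(2 * lam * γ); -(2 * lam * γ), 2 * lam * γ ^ 2] := by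
    show Matrix.vecMulVec σ σ = _
    ext i j
    fin_cases i <;> fin_cases j <;>
      simp [Matrix.vecMulVec_apply, σ] <;> ring_nf <;>
      rw [Real.sq_sqrt (by norm_num : (0:ℝ) ≤ 2), Real.sq_sqrt hlam.le] <;> ring
  refine ⟨hS, ?_⟩
  rw [hS]
  show Vinf * A + Aᵀ * Vinf + _ = 0
  have hβ' : β ≠ 0 := hβ.ne'
  have hγ' : γ ≠ 0 := hγ.ne'
  have hAT : Aᵀ = !![0, β; -ε, -γ * β] := by
    ext i j; fin_cases i <;> fin_cases j <;> simp [A]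
  rw [hAT]
  ext i j
  fin_cases i <;> fin_cases j <;>
    simp [A, Vinf, Matrix.mul_apply, Fin.sum_univ_two] <;>
    field_simp <;> ring
end

section
/- For every initial matrix V₀ ∈ M₂(ℝ) there exists a unique differentiable function V : [0,∞) → M₂(ℝ) with V(0) = V₀ satisfying V'(t) = V(t)A + AᵀV(t) + σᵀσ for all t ≥ 0, and this solution satisfies V(t) → V∞ as t → ∞, where V∞ = [[λ/(βγ), -λ/β], [-λ/β, λ(βγ² + ε)/(β²γ)]]. -/
/-!
With `V∞` solving the algebraic Lyapunov equation `AᵀV∞ + V∞A + σᵀσ = 0`, the difference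
`V - V∞` solves the homogeneous equation, whose solutions are `t ↦ exp(tA)ᵀ C exp(tA)`. This
gives the explicit solution `V(t) = exp(tA)ᵀ (V₀ - V∞) exp(tA) + V∞`; uniqueness holds
because the right-hand side is an affine, hence Lipschitz, vector field. The characteristic
polynomial `x² + γβx + εβ` of `A` has two distinct negative roots when `0 < 4ε < γ²β`, so
`A` is diagonalizable with negative eigenvalues, `exp(tA) → 0`, and `V(t) → V∞`.
-/

open Matrix Filter Topology NormedSpace Set

-- any norm would do: all that matters is a Banach algebra structure for the exponential calculus
attribute [local instance] Matrix.linftyOpNormedRing Matrix.linftyOpNormedAlgebra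

theorem eqOn_Ici_of_hasDerivAt_clm_add {E : Type*} [NormedAddCommGroup E] [NormedSpace ℝ E]
    (L : E →L[ℝ] E) (b : E) {f g : ℝ → E}
    (hf : ∀ t, 0 ≤ t → HasDerivAt f (L (f t) + b) t)
    (hg : ∀ t, 0 ≤ t → HasDerivAt g (L (g t) + b) t) (h0 : f 0 = g 0) :
    EqOn f g (Ici 0) := fun _ ht =>
  ODE_solution_unique_of_mem_Icc_right (v := fun _ x => L x + b) (s := fun _ => univ)
    (fun _ _ => (L.lipschitz.add (LipschitzWith.const b)).lipschitzOnWith)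
    (HasDerivAt.continuousOn fun s hs => hf s hs.1)
    (fun s hs => (hf s hs.1).hasDerivWithinAt) (fun _ _ => trivial)
    (HasDerivAt.continuousOn fun s hs => hg s hs.1)
    (fun s hs => (hg s hs.1).hasDerivWithinAt) (fun _ _ => trivial) h0 ⟨ht, le_rfl⟩

section
variable {n : Type*} [Fintype n] [DecidableEq n]

theorem Matrix.hasDerivAt_iff_forall_entry {f : ℝ → Matrix n n ℝ} {f' : Matrix n n ℝ}
    {t : ℝ} :
    HasDerivAt f f' t ↔ ∀ i j, HasDerivAt (fun s => f s i j) (f' i j) t := by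
  let e : Matrix n n ℝ ≃L[ℝ] (n → n → ℝ) :=
    (Matrix.ofLinearEquiv ℝ).symm.toContinuousLinearEquiv
  have he :
      HasDerivAt (e ∘ f) (e f') t ↔ ∀ i j, HasDerivAt (fun s => f s i j) (f' i j) t := by
    simp only [hasDerivAt_pi]; rfl
  -- `e` unfolds to the identity, so `e.symm ∘ e ∘ f` is `f` by definition
  refine ⟨fun h => he.1 (e.hasFDerivAt.comp_hasDerivAt t h), fun h => ?_⟩
  exact e.symm.hasFDerivAt.comp_hasDerivAt t (he.2 h)

theorem Matrix.tendsto_exp_smul_atTop_zero {A P : Matrix n n ℝ} {μ : n → ℝ}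
    (hP : IsUnit P.det) (hAP : A * P = P * diagonal μ) (hμ : ∀ i, μ i < 0) :
    Tendsto (fun t : ℝ => exp (t • A)) atTop (𝓝 0) := by
  have hA : A = P * diagonal μ * P⁻¹ := by rw [← hAP, mul_nonsing_inv_cancel_right _ _ hP]
  have hexp (t : ℝ) : exp (t • A) = P * diagonal (fun i => Real.exp (t * μ i)) * P⁻¹ := by
    have htA : t • A = P * diagonal (t • μ) * P⁻¹ := by
      rw [hA, diagonal_smul, mul_smul_comm, smul_mul_assoc]
    rw [htA, exp_conj _ _ ((isUnit_iff_isUnit_det P).2 hP), exp_diagonal]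
    congr
    ext i
    simp [Real.exp_eq_exp_ℝ]
  have hdiag : Tendsto (fun t : ℝ => diagonal (fun i => Real.exp (t * μ i))) atTop (𝓝 0) := by
    rw [← diagonal_zero]
    refine (continuous_id.matrix_diagonal.tendsto _).comp (tendsto_pi_nhds.2 fun i => ?_)
    exact Real.tendsto_exp_atBot.comp (tendsto_id.atTop_mul_const_of_neg (hμ i))
  simpa [hexp] using (hdiag.const_mul P).mul_const P⁻¹

theorem eqOn_Ici_of_hasDerivAt_lyapunov {A S : Matrix n n ℝ} {V W : ℝ → Matrix n n ℝ}
    (hV : ∀ t, 0 ≤ t → HasDerivAt V (V t * A + Aᵀ * V t + S) t)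
    (hW : ∀ t, 0 ≤ t → HasDerivAt W (W t * A + Aᵀ * W t + S) t) (h0 : V 0 = W 0) :
    EqOn V W (Ici 0) :=
  eqOn_Ici_of_hasDerivAt_clm_add
    (LinearMap.toContinuousLinearMap (LinearMap.mulRight ℝ A + LinearMap.mulLeft ℝ Aᵀ)) S
    hV hW h0

noncomputable def lyapunovFlow (A Vinf V₀ : Matrix n n ℝ) (t : ℝ) : Matrix n n ℝ :=
  (exp (t • A))ᵀ * (V₀ - Vinf) * exp (t • A) + Vinf

variable (A Vinf V₀ : Matrix n n ℝ)

theorem lyapunovFlow_zero : lyapunovFlow A Vinf V₀ 0 = V₀ := by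
  simp [lyapunovFlow]

theorem hasDerivAt_lyapunovFlow {S : Matrix n n ℝ} (hVinf : Aᵀ * Vinf + Vinf * A + S = 0)
    (t : ℝ) :
    HasDerivAt (lyapunovFlow A Vinf V₀)
      (lyapunovFlow A Vinf V₀ t * A + Aᵀ * lyapunovFlow A Vinf V₀ t + S) t := by
  have hexpT : HasDerivAt (fun s : ℝ => (exp (s • A))ᵀ) (Aᵀ * (exp (t • A))ᵀ) t := by
    simp only [← exp_transpose]
    exact hasDerivAt_exp_smul_const' Aᵀ t
  -- stated for an arbitrary `E` so that `noncomm_ring` sees the plain matrix instances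
  have key (E : Matrix n n ℝ) : Aᵀ * Eᵀ * (V₀ - Vinf) * E + Eᵀ * (V₀ - Vinf) * (E * A) =
      (Eᵀ * (V₀ - Vinf) * E + Vinf) * A + Aᵀ * (Eᵀ * (V₀ - Vinf) * E + Vinf) + S := by
    rw [eq_neg_of_add_eq_zero_right hVinf]
    noncomm_ring
  exact (((hexpT.mul_const (V₀ - Vinf)).mul (hasDerivAt_exp_smul_const A t)).add_const
    Vinf).congr_deriv (key _)

theorem tendsto_lyapunovFlow (hA : Tendsto (fun t : ℝ => exp (t • A)) atTop (𝓝 0)) :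
    Tendsto (lyapunovFlow A Vinf V₀) atTop (𝓝 Vinf) := by
  have hAT : Tendsto (fun t : ℝ => (exp (t • A))ᵀ) atTop (𝓝 0) := by
    simpa [Function.comp_def] using (continuous_id.matrix_transpose.tendsto 0).comp hA
  unfold lyapunovFlow
  simpa using ((hAT.mul_const (V₀ - Vinf)).mul hA).add_const Vinf
end

section
variable {β γ ε : ℝ}

theorem tendsto_exp_smul_drift (hβ : 0 < β) (hγ : 0 < γ) (hε : 0 < ε)
    (hεb : ε < γ ^ 2 * β / 4) :
    Tendsto (fun t : ℝ => exp (t • !![0, -ε; β, -γ * β])) atTop (𝓝 0) := by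
  set r := √(γ ^ 2 * β ^ 2 - 4 * (ε * β))
  have hr2 : r ^ 2 = γ ^ 2 * β ^ 2 - 4 * (ε * β) := Real.sq_sqrt (by nlinarith)
  have hr : 0 < r := Real.sqrt_pos.2 (by nlinarith)
  have hrlt : r < γ * β := by nlinarith [mul_pos hγ hβ]
  -- the two real roots of the characteristic polynomial `x² + γβ x + εβ`
  set μ : Fin 2 → ℝ := ![(-(γ * β) + r) / 2, (-(γ * β) - r) / 2]
  have hroot : ∀ i, μ i ^ 2 + γ * β * μ i + ε * β = 0 := by
    simp only [Fin.forall_fin_two]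
    constructor <;> simp [μ] <;> linear_combination hr2 / 4
  -- the columns `(-ε, μ j)` of `P` are eigenvectors of the drift matrix
  set P : Matrix (Fin 2) (Fin 2) ℝ := of fun i j => ![-ε, μ j] i
  have hdet : P.det = ε * r := by
    simp [P, det_fin_two, μ]
    ring
  refine tendsto_exp_smul_atTop_zero (P := P) (μ := μ) ?_ ?_ ?_
  · rw [hdet, isUnit_iff_ne_zero]
    positivity
  · ext i j
    rw [mul_diagonal]
    fin_cases i <;> simp [P, mul_apply]
    linear_combination -hroot j
  · simp only [Fin.forall_fin_two]
    constructor <;> simp [μ] <;> linarith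

theorem lyapunov_equation_drift (hβ : β ≠ 0) (hγ : γ ≠ 0) {lam : ℝ} (hlam : 0 ≤ lam) :
    (!![0, -ε; β, -γ * β])ᵀ *
        !![lam / (β * γ), -lam / β; -lam / β, lam * (β * γ ^ 2 + ε) / (β ^ 2 * γ)] +
      !![lam / (β * γ), -lam / β; -lam / β, lam * (β * γ ^ 2 + ε) / (β ^ 2 * γ)] *
        !![0, -ε; β, -γ * β] +
      vecMulVec ![-√(2 * lam), γ * √(2 * lam)] ![-√(2 * lam), γ * √(2 * lam)] = 0 := by
  have hs : √(2 * lam) ^ 2 = 2 * lam := Real.sq_sqrt (by linarith)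
  generalize √(2 * lam) = s at hs ⊢
  ext i j
  fin_cases i <;> fin_cases j <;> simp [mul_apply] <;> field_simp <;> rw [hs] <;> ring
end

/-- existence, uniqueness on `[0,∞)`, and convergence to `V∞` of
solutions of the matrix ODE `V̇(t) = V(t)A + AᵀV(t) + σᵀσ`. -/
theorem stmt_8 (β γ ε lam : ℝ) (hβ : 0 < β) (hγ : 0 < γ) (hε : 0 < ε)
    (hεbound : ε < γ ^ 2 * β / 4) (hlam : 0 < lam)
    (V₀ : Matrix (Fin 2) (Fin 2) ℝ) :
    let A : Matrix (Fin 2) (Fin 2) ℝ := !![0, -ε; β, -γ * β]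
    let σ : Fin 2 → ℝ := ![-Real.sqrt (2 * lam), γ * Real.sqrt (2 * lam)]
    let S : Matrix (Fin 2) (Fin 2) ℝ := Matrix.vecMulVec σ σ
    let Vinf : Matrix (Fin 2) (Fin 2) ℝ :=
      !![lam / (β * γ), -lam / β; -lam / β, lam * (β * γ ^ 2 + ε) / (β ^ 2 * γ)]
    ∃ V : ℝ → Matrix (Fin 2) (Fin 2) ℝ,
      (V 0 = V₀ ∧
        ∀ t : ℝ, 0 ≤ t → ∀ i j : Fin 2,
          HasDerivAt (fun s => V s i j) ((V t * A + Aᵀ * V t + S) i j) t) ∧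
      (∀ W : ℝ → Matrix (Fin 2) (Fin 2) ℝ, W 0 = V₀ →
        (∀ t : ℝ, 0 ≤ t → ∀ i j : Fin 2,
          HasDerivAt (fun s => W s i j) ((W t * A + Aᵀ * W t + S) i j) t) →
        ∀ t : ℝ, 0 ≤ t → W t = V t) ∧
      (∀ i j : Fin 2, Tendsto (fun t => V t i j) atTop (nhds (Vinf i j))) := by
  intro A σ S Vinf
  have hVinf : Aᵀ * Vinf + Vinf * A + S = 0 := lyapunov_equation_drift hβ.ne' hγ.ne' hlam.le
  have hV (t : ℝ) := hasDerivAt_lyapunovFlow A Vinf V₀ hVinf t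
  refine ⟨lyapunovFlow A Vinf V₀, ⟨lyapunovFlow_zero A Vinf V₀, fun t _ =>
    hasDerivAt_iff_forall_entry.1 (hV t)⟩, fun W hW0 hW t ht => ?_, fun i j => ?_⟩
  · refine eqOn_Ici_of_hasDerivAt_lyapunov (fun s hs => hasDerivAt_iff_forall_entry.2 (hW s hs))
      (fun s _ => hV s) ?_ ht
    rw [hW0, lyapunovFlow_zero]
  · have h := tendsto_lyapunovFlow A Vinf V₀ (tendsto_exp_smul_drift hβ hγ hε hεbound)
    exact tendsto_pi_nhds.1 (tendsto_pi_nhds.1 h i) j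
end

section
/- There exists a constant C ≥ 1, depending only on β, γ, ε, such that every differentiable function m : [0,∞) → ℝ² satisfying m'(t) = m(t)A for all t ≥ 0 obeys ‖m(t)‖ ≤ C e^{-ν₁ t} ‖m(0)‖ for all t ≥ 0; in particular m(t) → (0,0) as t → ∞. -/
open Filter Topology Real

/-!
The characteristic polynomial of `A` is `λ² + γβλ + εβ`, with the two distinct real roots
`-ν₁ > -ν₂` because `ε < γ²β/4`. For each root the coordinate `m ↦ ε m₁ + ν m₂` of a solution
decays exactly like `e^{-ν t}`, and the two coordinates together determine `m` linearly.
Hence `‖m(t)‖` is bounded by a fixed multiple of `e^{-ν₁ t} ‖m(0)‖`.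
-/

theorem sqrt_sq_add_sq_le_abs_add_abs (x y : ℝ) : √(x ^ 2 + y ^ 2) ≤ |x| + |y| :=
  (sqrt_le_left (by positivity)).2 <| by
    nlinarith [sq_abs x, sq_abs y, abs_nonneg x, abs_nonneg y]

theorem abs_mul_add_mul_le (p q x y : ℝ) :
    |p * x + q * y| ≤ (|p| + |q|) * √(x ^ 2 + y ^ 2) := by
  have hx : |x| ≤ √(x ^ 2 + y ^ 2) := abs_le_sqrt (by nlinarith [sq_nonneg y])
  have hy : |y| ≤ √(x ^ 2 + y ^ 2) := abs_le_sqrt (by nlinarith [sq_nonneg x])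
  calc |p * x + q * y| ≤ |p| * |x| + |q| * |y| := by
        simpa only [abs_mul] using abs_add_le (p * x) (q * y)
    _ ≤ (|p| + |q|) * √(x ^ 2 + y ^ 2) := by rw [add_mul]; gcongr

theorem abs_mul_sub_mul_le (a b u v : ℝ) : |a * u - b * v| ≤ (|a| + |b|) * (|u| + |v|) := by
  calc |a * u - b * v| ≤ |a| * |u| + |b| * |v| := by
        simpa only [abs_mul] using abs_sub (a * u) (b * v)
    _ ≤ (|a| + |b|) * (|u| + |v|) := by
        nlinarith [abs_nonneg a, abs_nonneg b, abs_nonneg u, abs_nonneg v]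

/-- Inverting the linear map `(x, y) ↦ (p₁ x + q₁ y, p₂ x + q₂ y)` by Cramer's rule. -/
theorem sqrt_sq_add_sq_le_of_det_ne_zero {p₁ q₁ p₂ q₂ : ℝ} (hD : p₁ * q₂ - p₂ * q₁ ≠ 0)
    (x y : ℝ) :
    √(x ^ 2 + y ^ 2) ≤ (|p₁| + |q₁| + |p₂| + |q₂|) / |p₁ * q₂ - p₂ * q₁| *
      (|p₁ * x + q₁ * y| + |p₂ * x + q₂ * y|) := by
  have hx : |p₁ * q₂ - p₂ * q₁| * |x| ≤
      (|q₂| + |q₁|) * (|p₁ * x + q₁ * y| + |p₂ * x + q₂ * y|) := by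
    rw [← abs_mul, show (p₁ * q₂ - p₂ * q₁) * x =
      q₂ * (p₁ * x + q₁ * y) - q₁ * (p₂ * x + q₂ * y) by ring]
    exact abs_mul_sub_mul_le _ _ _ _
  have hy : |p₁ * q₂ - p₂ * q₁| * |y| ≤
      (|p₁| + |p₂|) * (|p₂ * x + q₂ * y| + |p₁ * x + q₁ * y|) := by
    rw [← abs_mul, show (p₁ * q₂ - p₂ * q₁) * y =
      p₁ * (p₂ * x + q₂ * y) - p₂ * (p₁ * x + q₁ * y) by ring]
    exact abs_mul_sub_mul_le _ _ _ _
  rw [div_mul_eq_mul_div, le_div_iff₀ (abs_pos.2 hD)]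
  calc √(x ^ 2 + y ^ 2) * |p₁ * q₂ - p₂ * q₁|
      ≤ (|x| + |y|) * |p₁ * q₂ - p₂ * q₁| := by gcongr; exact sqrt_sq_add_sq_le_abs_add_abs x y
    _ ≤ _ := by linarith

theorem eq_mul_exp_of_hasDerivAt {f : ℝ → ℝ} {c : ℝ}
    (hf : ∀ t, 0 ≤ t → HasDerivAt f (c * f t) t) {t : ℝ} (ht : 0 ≤ t) :
    f t = f 0 * exp (c * t) := by
  have hderiv : ∀ s, 0 ≤ s → HasDerivAt (fun s => f s * exp (-(c * s))) 0 s := by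
    intro s hs
    have hexp : HasDerivAt (fun s => exp (-(c * s))) (exp (-(c * s)) * -c) s := by
      simpa using ((hasDerivAt_id s).const_mul c).neg.exp
    exact ((hf s hs).mul hexp).congr_deriv (by ring)
  have hconst : f t * exp (-(c * t)) = f 0 * exp (-(c * 0)) :=
    constant_of_has_deriv_right_zero (fun s hs => (hderiv s hs.1).continuousAt.continuousWithinAt)
      (fun s hs => (hderiv s hs.1).hasDerivWithinAt) t ⟨ht, le_rfl⟩
  calc f t = f t * exp (-(c * t)) * exp (c * t) := by rw [mul_assoc, ← exp_add]; simp
    _ = f 0 * exp (c * t) := by rw [hconst]; simp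

/-- The componentwise form of `m' = mA` on `[0, ∞)`, for `m = (m₁, m₂)`. -/
def IsForwardSolution (β γ ε : ℝ) (m₁ m₂ : ℝ → ℝ) : Prop :=
  ∀ t, 0 ≤ t → HasDerivAt m₁ (β * m₂ t) t ∧ HasDerivAt m₂ (-(ε * m₁ t) - γ * β * m₂ t) t

section IsForwardSolution

variable {β γ ε : ℝ}

/-- `(ε, ν)ᵀ` is an eigenvector of `A` for the eigenvalue `-ν` when `ν² - γβν + εβ = 0`. -/
theorem IsForwardSolution.eigencoord_eq_mul_exp {m₁ m₂ : ℝ → ℝ}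
    (hm : IsForwardSolution β γ ε m₁ m₂) {ν : ℝ} (hν : ν ^ 2 - γ * β * ν + ε * β = 0)
    {t : ℝ} (ht : 0 ≤ t) :
    ε * m₁ t + ν * m₂ t = (ε * m₁ 0 + ν * m₂ 0) * exp (-ν * t) :=
  eq_mul_exp_of_hasDerivAt (f := fun t => ε * m₁ t + ν * m₂ t) (fun s hs => by
    obtain ⟨h₁, h₂⟩ := hm s hs
    exact ((h₁.const_mul ε).add (h₂.const_mul ν)).congr_deriv
      (by linear_combination m₂ s * hν)) ht

theorem exists_sqrt_le_mul_exp {ν₁ ν₂ : ℝ} (hε : ε ≠ 0) (hν : ν₁ < ν₂)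
    (h₁ : ν₁ ^ 2 - γ * β * ν₁ + ε * β = 0) (h₂ : ν₂ ^ 2 - γ * β * ν₂ + ε * β = 0) :
    ∃ C, ∀ m₁ m₂ : ℝ → ℝ, IsForwardSolution β γ ε m₁ m₂ → ∀ t, 0 ≤ t →
      √(m₁ t ^ 2 + m₂ t ^ 2) ≤ C * exp (-ν₁ * t) * √(m₁ 0 ^ 2 + m₂ 0 ^ 2) := by
  have hD : ε * ν₂ - ε * ν₁ ≠ 0 := by
    rw [← mul_sub]; exact mul_ne_zero hε (sub_ne_zero.2 hν.ne')
  refine ⟨(|ε| + |ν₁| + |ε| + |ν₂|) / |ε * ν₂ - ε * ν₁| * (|ε| + |ν₁| + (|ε| + |ν₂|)),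
    fun m₁ m₂ hm t ht => ?_⟩
  have hexp : exp (-ν₂ * t) ≤ exp (-ν₁ * t) := exp_le_exp.2 (by nlinarith)
  have hcoords : |ε * m₁ t + ν₁ * m₂ t| + |ε * m₁ t + ν₂ * m₂ t| ≤
      (|ε| + |ν₁| + (|ε| + |ν₂|)) * exp (-ν₁ * t) * √(m₁ 0 ^ 2 + m₂ 0 ^ 2) := by
    rw [hm.eigencoord_eq_mul_exp h₁ ht, hm.eigencoord_eq_mul_exp h₂ ht, abs_mul, abs_mul,
      abs_exp, abs_exp]
    have h0₁ := abs_mul_add_mul_le ε ν₁ (m₁ 0) (m₂ 0)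
    have h0₂ := abs_mul_add_mul_le ε ν₂ (m₁ 0) (m₂ 0)
    calc _ ≤ |ε * m₁ 0 + ν₁ * m₂ 0| * exp (-ν₁ * t) +
          |ε * m₁ 0 + ν₂ * m₂ 0| * exp (-ν₁ * t) := by gcongr
      _ ≤ _ := by rw [← add_mul, mul_right_comm]; gcongr; linarith
  calc √(m₁ t ^ 2 + m₂ t ^ 2)
      ≤ (|ε| + |ν₁| + |ε| + |ν₂|) / |ε * ν₂ - ε * ν₁| *
          (|ε * m₁ t + ν₁ * m₂ t| + |ε * m₁ t + ν₂ * m₂ t|) :=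
        sqrt_sq_add_sq_le_of_det_ne_zero hD _ _
    _ ≤ _ := by rw [mul_assoc, mul_assoc]; gcongr; rw [← mul_assoc]; exact hcoords

end IsForwardSolution

theorem tendsto_prodMk_zero_of_sqrt_le {α : Type*} {l : Filter α} {f g h : α → ℝ}
    (hh : Tendsto h l (𝓝 0)) (hfg : ∀ᶠ t in l, √(f t ^ 2 + g t ^ 2) ≤ h t) :
    Tendsto (fun t => (f t, g t)) l (𝓝 (0, 0)) := by
  refine squeeze_zero_norm' (hfg.mono fun t ht => (norm_prod_le_iff.2 ⟨?_, ?_⟩).trans ht) hh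
  · exact abs_le_sqrt (by nlinarith [sq_nonneg (g t)])
  · exact abs_le_sqrt (by nlinarith [sq_nonneg (f t)])

/-- uniform exponential decay at rate `ν₁` (with a constant `C`
depending only on `β, γ, ε`) for all solutions of `m'(t) = m(t)A`, where
`A = [[0, -ε], [β, -γβ]]` acts on row vectors; in particular `m(t) → (0,0)`. -/
theorem stmt_9 (β γ ε : ℝ) (hβ : 0 < β) (hγ : 0 < γ) (hε : 0 < ε)
    (hεbound : ε < γ ^ 2 * β / 4) :
    let ν₁ : ℝ := (γ * β - Real.sqrt (γ ^ 2 * β ^ 2 - 4 * ε * β)) / 2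
    ∃ C : ℝ, 1 ≤ C ∧
      ∀ m₁ m₂ : ℝ → ℝ,
        (∀ t : ℝ, 0 ≤ t →
          HasDerivAt m₁ (β * m₂ t) t ∧
          HasDerivAt m₂ (-(ε * m₁ t) - γ * β * m₂ t) t) →
        (∀ t : ℝ, 0 ≤ t →
          Real.sqrt ((m₁ t) ^ 2 + (m₂ t) ^ 2) ≤
            C * Real.exp (-ν₁ * t) * Real.sqrt ((m₁ 0) ^ 2 + (m₂ 0) ^ 2)) ∧
        Tendsto (fun t => (m₁ t, m₂ t)) atTop (nhds ((0 : ℝ), (0 : ℝ))) := by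
  intro ν₁
  set s := √(γ ^ 2 * β ^ 2 - 4 * ε * β)
  have hdisc : 0 < γ ^ 2 * β ^ 2 - 4 * ε * β := by nlinarith
  have hs : 0 < s := sqrt_pos.2 hdisc
  have hs2 : s ^ 2 = γ ^ 2 * β ^ 2 - 4 * ε * β := sq_sqrt hdisc.le
  have hν₁_eq : ν₁ = (γ * β - s) / 2 := rfl
  have hν₁ : 0 < ν₁ := by
    have : s < γ * β := (sqrt_lt' (by positivity)).2 (by nlinarith)
    rw [hν₁_eq]; linarith
  obtain ⟨C, hC⟩ := exists_sqrt_le_mul_exp (γ := γ) (β := β) hε.ne'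
    (ν₁ := ν₁) (ν₂ := (γ * β + s) / 2) (by rw [hν₁_eq]; linarith)
    (by rw [hν₁_eq]; linear_combination hs2 / 4) (by linear_combination hs2 / 4)
  refine ⟨max 1 C, le_max_left _ _, fun m₁ m₂ hm => ?_⟩
  have hbound : ∀ t, 0 ≤ t →
      √(m₁ t ^ 2 + m₂ t ^ 2) ≤ max 1 C * exp (-ν₁ * t) * √(m₁ 0 ^ 2 + m₂ 0 ^ 2) :=
    fun t ht => (hC m₁ m₂ hm t ht).trans (by gcongr; exact le_max_right _ _)
  refine ⟨hbound, tendsto_prodMk_zero_of_sqrt_le ?_ (eventually_ge_atTop 0 |>.mono hbound)⟩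
  simpa using ((tendsto_exp_atBot.comp
    (tendsto_id.const_mul_atTop_of_neg (neg_neg_of_pos hν₁))).const_mul (max 1 C)).mul_const
    (√(m₁ 0 ^ 2 + m₂ 0 ^ 2))
end

section
/- Let λ > 0 and let u : [0,∞) → ℝ² be the differentiable solution of u'(t) = u(t)A with u(0) = (γλ/ε, -λ/β). Then for every t > 0 it is impossible that simultaneously the second coordinate satisfies u₂(t) = -λ/β and the first coordinate satisfies u₁(t) ≥ γλ/ε. -/
/-!
The quadratic form `E(x) = εβ x₁² + β² x₂²` is a Lyapunov function for `u' = uA`: along a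
solution, `E(u)' = -2γβ³ u₂² ≤ 0`. If at some `t > 0` we had `u₂(t) = -λ/β` and
`u₁(t) ≥ γλ/ε > 0`, then `E(u(t)) ≥ E(u(0))`, so `E ∘ u` would be constant on `[0, t]`, forcing
`u₂ ≡ 0` on `(0, t)`. By continuity `u₂(0) = 0`, contradicting `u₂(0) = -λ/β ≠ 0`.
-/

open Set Filter Topology

theorem AntitoneOn.eqOn_of_le {α β : Type*} [Preorder α] [PartialOrder β] {f : α → β}
    {a b : α} (hf : AntitoneOn f (Icc a b)) (hab : a ≤ b) (h : f a ≤ f b) :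
    EqOn f (fun _ => f a) (Icc a b) := fun _ hs =>
  le_antisymm (hf ⟨le_rfl, hab⟩ hs hs.1) (h.trans (hf hs ⟨hab, le_rfl⟩ hs.2))

theorem AntitoneOn.hasDerivAt_eq_zero_of_le {f : ℝ → ℝ} {a b x f' : ℝ}
    (hf : AntitoneOn f (Icc a b)) (h : f a ≤ f b) (hx : x ∈ Ioo a b) (hd : HasDerivAt f f' x) :
    f' = 0 :=
  hd.unique <| (hasDerivAt_const x (f a)).congr_of_eventuallyEq <|
    eventuallyEq_of_mem (Icc_mem_nhds hx.1 hx.2) (hf.eqOn_of_le (hx.1.trans hx.2).le h)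

def dampedEnergy (β ε : ℝ) (x : ℝ × ℝ) : ℝ := ε * β * x.1 ^ 2 + β ^ 2 * x.2 ^ 2

section DampedSystem

variable {β γ ε : ℝ} {u : ℝ → ℝ × ℝ}

theorem hasDerivAt_dampedEnergy {t : ℝ}
    (h₁ : HasDerivAt (fun s => (u s).1) (β * (u t).2) t)
    (h₂ : HasDerivAt (fun s => (u s).2) (-(ε * (u t).1) - γ * β * (u t).2) t) :
    HasDerivAt (fun s => dampedEnergy β ε (u s)) (-(2 * γ * β ^ 3 * (u t).2 ^ 2)) t := by
  refine (((h₁.pow 2).const_mul (ε * β)).add ((h₂.pow 2).const_mul (β ^ 2))).congr_deriv ?_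
  push_cast
  ring

theorem antitoneOn_dampedEnergy (hβ : 0 ≤ β) (hγ : 0 ≤ γ)
    (hode : ∀ t : ℝ, 0 ≤ t →
      HasDerivAt (fun s => (u s).1) (β * (u t).2) t ∧
      HasDerivAt (fun s => (u s).2) (-(ε * (u t).1) - γ * β * (u t).2) t) :
    AntitoneOn (fun s => dampedEnergy β ε (u s)) (Ici 0) := by
  have hE (t : ℝ) (ht : 0 ≤ t) := hasDerivAt_dampedEnergy (hode t ht).1 (hode t ht).2
  refine antitoneOn_of_hasDerivWithinAt_nonpos (f' := fun t => -(2 * γ * β ^ 3 * (u t).2 ^ 2))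
    (convex_Ici 0)
    (fun t ht => (hE t ht).continuousAt.continuousWithinAt) (fun t ht => ?_) (fun t _ => ?_)
  · rw [interior_Ici] at ht
    exact (hE t ht.le).hasDerivWithinAt
  · have : 0 ≤ 2 * γ * β ^ 3 * (u t).2 ^ 2 := by positivity
    linarith

end DampedSystem

theorem stmt_14_general (β γ ε lam : ℝ) (hβ : 0 < β) (hγ : 0 < γ) (hε : 0 < ε)
    (hlam : 0 < lam)
    (u : ℝ → ℝ × ℝ)
    (h0 : u 0 = (γ * lam / ε, -lam / β))
    (hode : ∀ t : ℝ, 0 ≤ t →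
      HasDerivAt (fun s => (u s).1) (β * (u t).2) t ∧
      HasDerivAt (fun s => (u s).2) (-(ε * (u t).1) - γ * β * (u t).2) t) :
    ∀ t : ℝ, 0 < t → ¬((u t).2 = -lam / β ∧ γ * lam / ε ≤ (u t).1) := by
  rintro t ht ⟨hu₂t, hu₁t⟩
  set E := fun s => dampedEnergy β ε (u s)
  have hanti : AntitoneOn E (Icc 0 t) :=
    (antitoneOn_dampedEnergy hβ.le hγ.le hode).mono Icc_subset_Ici_self
  have hE : E 0 ≤ E t := by
    simp only [E, dampedEnergy, h0, hu₂t]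
    gcongr
  have hu₂ : ∀ s ∈ Ioo 0 t, (u s).2 = 0 := fun s hs => by
    have := hanti.hasDerivAt_eq_zero_of_le hE hs
      (hasDerivAt_dampedEnergy (hode s hs.1.le).1 (hode s hs.1.le).2)
    simpa [hγ.ne', hβ.ne'] using this
  have hlim : Tendsto (fun s => (u s).2) (𝓝[>] 0) (𝓝 (u 0).2) :=
    (hode 0 le_rfl).2.continuousAt.continuousWithinAt
  have hu₂0 : (u 0).2 = 0 := tendsto_nhds_unique hlim <| tendsto_const_nhds.congr' <|
    eventuallyEq_of_mem (Ioo_mem_nhdsGT ht) fun s hs => (hu₂ s hs).symm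
  rw [h0] at hu₂0
  exact (div_neg_of_neg_of_pos (neg_neg_of_pos hlam) hβ).ne hu₂0

/-- the solution of `u'(t) = u(t)A` started at
`(γλ/ε, -λ/β)` never again satisfies both `u₂(t) = -λ/β` and `u₁(t) ≥ γλ/ε`
for `t > 0`. -/
theorem stmt_14 (β γ ε lam : ℝ) (hβ : 0 < β) (hγ : 0 < γ) (hε : 0 < ε)
    (hεbound : ε < γ ^ 2 * β / 4) (hlam : 0 < lam)
    (u : ℝ → ℝ × ℝ)
    (h0 : u 0 = (γ * lam / ε, -lam / β))
    (hode : ∀ t : ℝ, 0 ≤ t →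
      HasDerivAt (fun s => (u s).1) (β * (u t).2) t ∧
      HasDerivAt (fun s => (u s).2) (-(ε * (u t).1) - γ * β * (u t).2) t) :
    ∀ t : ℝ, 0 < t → ¬((u t).2 = -lam / β ∧ γ * lam / ε ≤ (u t).1) :=
  stmt_14_general β γ ε lam hβ hγ hε hlam u h0 hode
end
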